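/- arXiv:2508.02667 — 7 statements merged into one kernel-verified Lean document; each statement's English description precedes it below -/
import Mathlib

section
/- For every ε > 0 and every unit vector ν ∈ ℝ⁴, the function c(t) := ∫_{ℝ⁴} U_{ε,tν}(x)²·U_{ε,−tν}(x)² dx is differentiable at every t > 0 with c'(t) < 0; in particular c is strictly decreasing on [0,∞). -/
noncomputable section

open MeasureTheory Real RealInnerProductSpace

/-- Euclidean four-space. -/
abbrev E4 : Type := EuclideanSpace ℝ (Fin 4)

/-- The normalizing constant `c₄ = (6/π²)^(1/4)`. -/
def c4 : ℝ := (6 / Real.pi ^ 2) ^ ((1 : ℝ) / 4)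

/-- The Sobolev constant `S₄ = 8/c₄²`. -/
def S4 : ℝ := 8 / c4 ^ 2

/-- The standard (normalized) bubble `U(x) = c₄ (1+|x|²)⁻¹`. -/
def Ubub (x : E4) : ℝ := c4 * (1 + ‖x‖ ^ 2)⁻¹

/-- The rescaled/translated bubble `U_{ε,x₀}(x) = ε⁻¹ U((x - x₀)/ε)`. -/
def Ueps (ε : ℝ) (x₀ : E4) (x : E4) : ℝ := ε⁻¹ * Ubub (ε⁻¹ • (x - x₀))

/-- The double bubble `Û_{ε,x₀} = U_{ε,x₀} + U_{ε,-x₀}`. -/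
def Uhat (ε : ℝ) (x₀ : E4) (x : E4) : ℝ := Ueps ε x₀ x + Ueps ε (-x₀) x

/-- The first standard basis vector of `ℝ⁴`. -/
def e1 : E4 := EuclideanSpace.single (0 : Fin 4) (1 : ℝ)

/-- The Yamabe (Sobolev) quotient `Q(u) = 6 ∫ |∇u|² / (∫ u⁴)^{1/2}` on `ℝ⁴`. -/
def Qyam (u : E4 → ℝ) : ℝ :=
  6 * (∫ x : E4, ‖gradient u x‖ ^ 2) / Real.sqrt (∫ x : E4, (u x) ^ 4)

/-!
With `g = (ε² + ‖·‖²)⁻²`, so that `U_{ε,x₀}² = c₄² ε² g(· - x₀)`, translating by `tν` gives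
`c(t) = c₄⁴ ε⁴ A(2t)` for the autocorrelation `A(s) = ∫ g(x) g(x + sν) dx`. Since `g` decays like
`|x|⁻⁴` and its derivative like `|x|⁻⁵`, `A` may be differentiated under the integral sign in any
dimension below 8, with `A'(s) = -4 ∫ g(x) ⟪x + sν, ν⟫ (ε² + ‖x + sν‖²)⁻³ dx`. Centring at
`y = x + sν` and pairing `y` with `-y` turns the integrand into
`½ (ε² + ‖y‖²)⁻³ ⟪y, ν⟫ (g(y - sν) - g(y + sν))`, which is positive off the hyperplane `ν^⊥`
because `‖y - sν‖ < ‖y + sν‖` exactly when `⟪y, ν⟫ > 0`. Hence `A' < 0` on `(0, ∞)`.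
-/

namespace BubbleInteraction

open Module

variable {E : Type*} [NormedAddCommGroup E] {b : ℝ}

def profile (b : ℝ) (k : ℕ) (y : E) : ℝ := ((b + ‖y‖ ^ 2) ^ k)⁻¹

theorem profile_pos (hb : 0 < b) (k : ℕ) (y : E) : 0 < profile b k y := by
  unfold profile; positivity

@[simp]
theorem profile_neg (b : ℝ) (k : ℕ) (y : E) : profile b k (-y) = profile b k y := by
  simp [profile]

theorem continuous_profile (hb : 0 < b) (k : ℕ) : Continuous (profile (E := E) b k) :=
  ((continuous_const.add (continuous_norm.pow 2)).pow k).inv₀ fun y =>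
    (pow_pos (by positivity : 0 < b + ‖y‖ ^ 2) k).ne'

theorem profile_lt_profile (hb : 0 < b) {k : ℕ} (hk : k ≠ 0) {y z : E} (h : ‖y‖ ^ 2 < ‖z‖ ^ 2) :
    profile b k z < profile b k y :=
  inv_strictAnti₀ (by positivity) (pow_lt_pow_left₀ (by linarith) (by positivity) hk)

theorem profile_le (hb : 0 < b) (k : ℕ) (y : E) :
    profile b k y ≤ (2 / b + 2) ^ k * ((1 + ‖y‖) ^ (2 * k))⁻¹ := by
  have hsq : (1 + ‖y‖) ^ 2 ≤ (2 / b + 2) * (b + ‖y‖ ^ 2) := by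
    have : 2 / b * b = 2 := by field_simp
    nlinarith [sq_nonneg (1 - ‖y‖), sq_nonneg ‖y‖, div_pos two_pos hb]
  have hinv : (b + ‖y‖ ^ 2)⁻¹ ≤ (2 / b + 2) * ((1 + ‖y‖) ^ 2)⁻¹ := by
    rw [← div_eq_mul_inv, inv_eq_one_div, div_le_div_iff₀ (by positivity) (by positivity), one_mul]
    exact hsq
  rw [profile, pow_mul, ← inv_pow, ← inv_pow, ← mul_pow]
  exact pow_le_pow_left₀ (by positivity) hinv k

theorem inv_one_add_norm_add_pow_le {R : ℝ} {a : E} (ha : ‖a‖ ≤ R) (m : ℕ) (x : E) :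
    ((1 + ‖x + a‖) ^ m)⁻¹ ≤ (1 + R) ^ m * ((1 + ‖x‖) ^ m)⁻¹ := by
  have hx : 1 + ‖x‖ ≤ (1 + R) * (1 + ‖x + a‖) := by
    have := norm_sub_le (x + a) a
    rw [add_sub_cancel_right] at this
    nlinarith [norm_nonneg (x + a), norm_nonneg a]
  have hinv : (1 + ‖x + a‖)⁻¹ ≤ (1 + R) * (1 + ‖x‖)⁻¹ := by
    have hR : 0 ≤ R := (norm_nonneg a).trans ha
    rw [← div_eq_mul_inv, inv_eq_one_div, div_le_div_iff₀ (by positivity) (by positivity), one_mul]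
    exact hx
  rw [← inv_pow, ← inv_pow, ← mul_pow]
  exact pow_le_pow_left₀ (by positivity) hinv m

theorem profile_mul_profile_add_le (hb : 0 < b) {R : ℝ} {a : E} (ha : ‖a‖ ≤ R) (x : E) :
    |profile b 2 x * profile b 2 (x + a)| ≤ (2 / b + 2) ^ 4 * (1 + R) ^ 4 * ((1 + ‖x‖) ^ 8)⁻¹ := by
  have hshift : profile b 2 (x + a) ≤ (2 / b + 2) ^ 2 * ((1 + R) ^ 4 * ((1 + ‖x‖) ^ 4)⁻¹) :=
    (profile_le hb 2 _).trans (by gcongr; exact inv_one_add_norm_add_pow_le ha 4 x)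
  rw [abs_of_pos (mul_pos (profile_pos hb 2 x) (profile_pos hb 2 _))]
  refine (mul_le_mul (profile_le hb 2 x) hshift (profile_pos hb 2 _).le
    (by positivity)).trans_eq ?_
  generalize 1 + ‖x‖ = w
  ring

theorem continuous_profile_mul_profile_add (hb : 0 < b) (a : E) :
    Continuous fun x => profile b 2 x * profile b 2 (x + a) :=
  (continuous_profile hb 2).mul ((continuous_profile hb 2).comp (continuous_add_const a))

variable [InnerProductSpace ℝ E]

theorem abs_inner_mul_profile_le (hb : 0 < b) (ν y : E) :
    |⟪y, ν⟫ * profile b 3 y| ≤ ‖ν‖ * (2 / b + 2) ^ 3 * ((1 + ‖y‖) ^ 5)⁻¹ := by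
  have hinner : |⟪y, ν⟫| ≤ ‖ν‖ * (1 + ‖y‖) :=
    (abs_real_inner_le_norm y ν).trans (by rw [mul_comm]; gcongr; linarith)
  rw [abs_mul, abs_of_pos (profile_pos hb 3 y)]
  refine (mul_le_mul hinner (profile_le hb 3 y) (profile_pos hb 3 y).le
    (by positivity)).trans_eq ?_
  generalize 1 + ‖y‖ = w
  by_cases hw : w = 0
  · simp [hw]
  · field_simp

theorem abs_profile_mul_inner_profile_add_le (hb : 0 < b) {R : ℝ} {a : E} (ha : ‖a‖ ≤ R)
    (ν x : E) :
    |profile b 2 x * (⟪x + a, ν⟫ * profile b 3 (x + a))| ≤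
      ‖ν‖ * (2 / b + 2) ^ 5 * (1 + R) ^ 5 * ((1 + ‖x‖) ^ 9)⁻¹ := by
  have hR : 0 ≤ R := (norm_nonneg a).trans ha
  have hshift : |⟪x + a, ν⟫ * profile b 3 (x + a)| ≤
      ‖ν‖ * (2 / b + 2) ^ 3 * ((1 + R) ^ 5 * ((1 + ‖x‖) ^ 5)⁻¹) :=
    (abs_inner_mul_profile_le hb ν _).trans (by gcongr; exact inv_one_add_norm_add_pow_le ha 5 x)
  rw [abs_mul, abs_of_pos (profile_pos hb 2 x)]
  refine (mul_le_mul (profile_le hb 2 x) hshift (abs_nonneg _) (by positivity)).trans_eq ?_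
  generalize 1 + ‖x‖ = w
  ring

theorem hasDerivAt_profile_add_smul (hb : 0 < b) (k : ℕ) (x ν : E) (s : ℝ) :
    HasDerivAt (fun s : ℝ => profile b k (x + s • ν))
      (-(2 * k) * (⟪x + s • ν, ν⟫ * profile b (k + 1) (x + s • ν))) s := by
  have hpos : 0 < b + ‖x + s • ν‖ ^ 2 := by positivity
  have hline : HasDerivAt (fun s : ℝ => x + s • ν) ν s := by
    simpa using ((hasDerivAt_id s).smul_const ν).const_add x
  refine (((hline.norm_sq.const_add b).fun_pow k).fun_inv
    (pow_ne_zero k hpos.ne')).congr_deriv ?_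
  rcases k with _ | k
  · simp
  · simp only [profile, Nat.add_sub_cancel]
    field_simp
    ring

theorem continuous_profile_mul_inner_profile_add (hb : 0 < b) (a ν : E) :
    Continuous fun x => profile b 2 x * (⟪x + a, ν⟫ * profile b 3 (x + a)) :=
  (continuous_profile hb 2).mul (((continuous_add_const a).inner continuous_const).mul
    ((continuous_profile hb 3).comp (continuous_add_const a)))

theorem inner_mul_profile_sub_profile_pos (hb : 0 < b) {k : ℕ} (hk : k ≠ 0) {ν y : E}
    (hy : ⟪y, ν⟫ ≠ 0) {s : ℝ} (hs : 0 < s) :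
    0 < ⟪y, ν⟫ * (profile b k (y - s • ν) - profile b k (y + s • ν)) := by
  have hdiff : ‖y + s • ν‖ ^ 2 - ‖y - s • ν‖ ^ 2 = 4 * s * ⟪y, ν⟫ := by
    rw [norm_add_sq_real, norm_sub_sq_real, real_inner_smul_right]; ring
  rcases hy.lt_or_gt with hneg | hpos
  · have := profile_lt_profile (b := b) hb hk (show ‖y + s • ν‖ ^ 2 < ‖y - s • ν‖ ^ 2 by nlinarith)
    nlinarith
  · have := profile_lt_profile (b := b) hb hk (show ‖y - s • ν‖ ^ 2 < ‖y + s • ν‖ ^ 2 by nlinarith)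
    nlinarith

theorem two_mul_integral_eq_integral_add_comp_neg {G : Type*} [MeasurableSpace G] [AddGroup G]
    [MeasurableNeg G] (μ : Measure G) [μ.IsNegInvariant] {f : G → ℝ} (hf : Integrable f μ) :
    2 * ∫ x, f x ∂μ = ∫ x, (f x + f (-x)) ∂μ := by
  rw [integral_add hf hf.comp_neg, integral_neg_eq_self]
  ring

section Autocorrelation

variable [FiniteDimensional ℝ E] [MeasurableSpace E] [BorelSpace E] (μ : Measure E)
  [μ.IsAddHaarMeasure]

theorem integrable_inv_one_add_norm_pow {m : ℕ} (hm : finrank ℝ E < m) :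
    Integrable (fun x : E => ((1 + ‖x‖) ^ m)⁻¹) μ := by
  refine (integrable_one_add_norm (μ := μ) (r := m) (by exact_mod_cast hm)).congr
    (ae_of_all _ fun x => ?_)
  dsimp only
  rw [Real.rpow_neg (by positivity), Real.rpow_natCast]

theorem integrable_of_abs_le_inv_one_add_norm_pow {f : E → ℝ} (hf : Continuous f) {C : ℝ} {m : ℕ}
    (hm : finrank ℝ E < m) (h : ∀ x, |f x| ≤ C * ((1 + ‖x‖) ^ m)⁻¹) : Integrable f μ :=
  ((integrable_inv_one_add_norm_pow μ hm).const_mul C).mono' hf.aestronglyMeasurable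
    (ae_of_all _ h)

theorem integral_pos_of_pos_of_inner_ne_zero {ν : E} (hν : ν ≠ 0) {f : E → ℝ}
    (hf : Integrable f μ) (h0 : 0 ≤ f) (hpos : ∀ y, ⟪y, ν⟫ ≠ 0 → 0 < f y) :
    0 < ∫ y, f y ∂μ := by
  have hhyperplane : μ {y | ⟪y, ν⟫ ≠ 0}ᶜ = 0 := by
    have : {y | ⟪y, ν⟫ ≠ 0}ᶜ = ((ℝ ∙ ν)ᗮ : Submodule ℝ E) := by
      ext y
      simp [Submodule.mem_orthogonal_singleton_iff_inner_left]
    rw [this]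
    refine Measure.addHaar_submodule μ _ fun htop => hν ?_
    have hmem : ν ∈ (ℝ ∙ ν)ᗮ := htop ▸ Submodule.mem_top
    exact inner_self_eq_zero.1 (Submodule.mem_orthogonal_singleton_iff_inner_left.1 hmem)
  have huniv := measure_univ_le_add_compl (μ := μ) {y | ⟪y, ν⟫ ≠ 0}
  rw [hhyperplane, add_zero] at huniv
  rw [integral_pos_iff_support_of_nonneg h0 hf]
  exact (Measure.measure_univ_pos.2 (NeZero.ne μ)).trans_le
    (huniv.trans (measure_mono fun y hy => (hpos y hy).ne'))

def autocorr (b : ℝ) (ν : E) (s : ℝ) : ℝ := ∫ x, profile b 2 x * profile b 2 (x + s • ν) ∂μ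

theorem hasDerivAt_autocorr (hE : finrank ℝ E < 8) (hb : 0 < b) (ν : E) (s₀ : ℝ) :
    HasDerivAt (autocorr μ b ν)
      (-4 * ∫ x, profile b 2 x * (⟪x + s₀ • ν, ν⟫ * profile b 3 (x + s₀ • ν)) ∂μ) s₀ := by
  set R := (|s₀| + 1) * ‖ν‖
  have hR : ∀ s ∈ Metric.ball s₀ 1, ‖s • ν‖ ≤ R := fun s hs => by
    rw [Metric.mem_ball, Real.dist_eq] at hs
    rw [norm_smul, Real.norm_eq_abs]
    exact mul_le_mul_of_nonneg_right (by linarith [abs_sub_abs_le_abs_sub s s₀]) (norm_nonneg ν)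
  rw [← integral_const_mul]
  refine (hasDerivAt_integral_of_dominated_loc_of_deriv_le
    (F' := fun s x => -4 * (profile b 2 x * (⟪x + s • ν, ν⟫ * profile b 3 (x + s • ν))))
    (bound := fun x => 4 * (‖ν‖ * (2 / b + 2) ^ 5 * (1 + R) ^ 5 * ((1 + ‖x‖) ^ 9)⁻¹))
    (Metric.ball_mem_nhds s₀ one_pos) (Filter.Eventually.of_forall fun s =>
      (continuous_profile_mul_profile_add hb (s • ν)).aestronglyMeasurable)
    ?_ ?_ ?_ ?_ ?_).2
  · exact integrable_of_abs_le_inv_one_add_norm_pow μ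
      (continuous_profile_mul_profile_add hb (s₀ • ν)) (by omega)
      (profile_mul_profile_add_le hb (hR s₀ (Metric.mem_ball_self one_pos)))
  · exact (continuous_const.mul
      (continuous_profile_mul_inner_profile_add hb (s₀ • ν) ν)).aestronglyMeasurable
  · refine Filter.Eventually.of_forall fun x s hs => ?_
    rw [Real.norm_eq_abs, abs_mul, abs_of_neg (by norm_num : (-4 : ℝ) < 0), neg_neg]
    gcongr
    exact abs_profile_mul_inner_profile_add_le hb (hR s hs) ν x
  · exact (integrable_inv_one_add_norm_pow μ (by omega)).const_mul _ |>.const_mul _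
  · refine Filter.Eventually.of_forall fun x s _ => ?_
    refine ((hasDerivAt_profile_add_smul hb 2 x ν s).const_mul (profile b 2 x)).congr_deriv ?_
    push_cast
    ring

theorem integral_profile_mul_inner_profile_add_pos (hE : finrank ℝ E < 8) (hb : 0 < b) {ν : E}
    (hν : ν ≠ 0) {s : ℝ} (hs : 0 < s) :
    0 < ∫ x, profile b 2 x * (⟪x + s • ν, ν⟫ * profile b 3 (x + s • ν)) ∂μ := by
  set h : E → ℝ := fun x => profile b 2 x * (⟪x + s • ν, ν⟫ * profile b 3 (x + s • ν))
  have hh : Integrable h μ := integrable_of_abs_le_inv_one_add_norm_pow μ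
    (continuous_profile_mul_inner_profile_add hb (s • ν) ν) (by omega)
    (abs_profile_mul_inner_profile_add_le hb le_rfl ν)
  have hk : Integrable (fun y => h (y - s • ν)) μ := hh.comp_sub_right _
  have hsym : ∀ y, h (y - s • ν) + h (-y - s • ν) =
      profile b 3 y * (⟪y, ν⟫ * (profile b 2 (y - s • ν) - profile b 2 (y + s • ν))) := by
    intro y
    simp only [h, sub_add_cancel, inner_neg_left, profile_neg]
    rw [← neg_add', profile_neg]
    ring
  have htwo : 2 * ∫ x, h x ∂μ = ∫ y, (h (y - s • ν) + h (-y - s • ν)) ∂μ := by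
    rw [← integral_sub_right_eq_self h (s • ν)]
    exact two_mul_integral_eq_integral_add_comp_neg μ hk
  have hpos : 0 < ∫ y, (h (y - s • ν) + h (-y - s • ν)) ∂μ := by
    refine integral_pos_of_pos_of_inner_ne_zero μ hν (hk.add hk.comp_neg) (fun y => ?_)
      (fun y hy => ?_) <;> rw [hsym]
    · by_cases hy : ⟪y, ν⟫ = 0
      · simp [hy]
      · exact (mul_pos (profile_pos hb 3 y)
          (inner_mul_profile_sub_profile_pos hb two_ne_zero hy hs)).le
    · exact mul_pos (profile_pos hb 3 y) (inner_mul_profile_sub_profile_pos hb two_ne_zero hy hs)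
  linarith

theorem deriv_autocorr_neg (hE : finrank ℝ E < 8) (hb : 0 < b) {ν : E} (hν : ν ≠ 0) {s : ℝ}
    (hs : 0 < s) : deriv (autocorr μ b ν) s < 0 := by
  rw [(hasDerivAt_autocorr μ hE hb ν s).deriv]
  linarith [integral_profile_mul_inner_profile_add_pos μ hE hb hν hs]

theorem differentiable_autocorr (hE : finrank ℝ E < 8) (hb : 0 < b) (ν : E) :
    Differentiable ℝ (autocorr μ b ν) := fun s =>
  (hasDerivAt_autocorr μ hE hb ν s).differentiableAt

theorem autocorr_strictAntiOn (hE : finrank ℝ E < 8) (hb : 0 < b) {ν : E} (hν : ν ≠ 0) :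
    StrictAntiOn (autocorr μ b ν) (Set.Ici 0) :=
  strictAntiOn_of_deriv_neg (convex_Ici 0)
    (differentiable_autocorr μ hE hb ν).continuous.continuousOn fun s hs =>
      deriv_autocorr_neg μ hE hb hν (by simpa using hs)

end Autocorrelation

end BubbleInteraction

open BubbleInteraction Module

theorem Ueps_sq {ε : ℝ} (hε : 0 < ε) (x₀ x : E4) :
    Ueps ε x₀ x ^ 2 = c4 ^ 2 * ε ^ 2 * profile (ε ^ 2) 2 (x - x₀) := by
  rw [Ueps, Ubub, profile, norm_smul, Real.norm_eq_abs, abs_inv, abs_of_pos hε]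
  field_simp

theorem integral_Ueps_sq_mul_Ueps_sq {ε : ℝ} (hε : 0 < ε) (ν : E4) (s : ℝ) :
    ∫ x, Ueps ε (s • ν) x ^ 2 * Ueps ε (-(s • ν)) x ^ 2 =
      c4 ^ 4 * ε ^ 4 * autocorr volume (ε ^ 2) ν (2 * s) := by
  rw [autocorr, ← integral_const_mul, ← integral_add_right_eq_self _ (s • ν)]
  congr 1 with x
  rw [Ueps_sq hε, Ueps_sq hε, add_sub_cancel_right, sub_neg_eq_add, add_assoc, ← two_smul ℝ,
    smul_smul]
  ring

/-- The interaction term `c(t) = ∫ U_{ε,tν}² U_{ε,-tν}²` is differentiable with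
negative derivative for every `t > 0`, and is strictly decreasing on `[0, ∞)`. -/
theorem stmt4 (ε : ℝ) (hε : 0 < ε) (ν : E4) (hν : ‖ν‖ = 1) :
    (∀ t : ℝ, 0 < t →
      DifferentiableAt ℝ (fun s : ℝ => ∫ x : E4, Ueps ε (s • ν) x ^ 2 * Ueps ε (-(s • ν)) x ^ 2) t ∧
      deriv (fun s : ℝ => ∫ x : E4, Ueps ε (s • ν) x ^ 2 * Ueps ε (-(s • ν)) x ^ 2) t < 0) ∧
    StrictAntiOn (fun s : ℝ => ∫ x : E4, Ueps ε (s • ν) x ^ 2 * Ueps ε (-(s • ν)) x ^ 2)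
      (Set.Ici 0) := by
  have hE : finrank ℝ E4 < 8 := by simp
  have hb : 0 < ε ^ 2 := by positivity
  have hν₀ : ν ≠ 0 := norm_ne_zero_iff.1 (by simp [hν])
  have hK : 0 < c4 ^ 4 * ε ^ 4 := by
    have : 0 < c4 := Real.rpow_pos_of_pos (by positivity) _
    positivity
  set A := autocorr volume (ε ^ 2) ν
  have hder : ∀ t : ℝ, HasDerivAt (fun s => c4 ^ 4 * ε ^ 4 * A (2 * s))
      (c4 ^ 4 * ε ^ 4 * (deriv A (2 * t) * 2)) t := fun t =>
    (((differentiable_autocorr volume hE hb ν (2 * t)).hasDerivAt.comp t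
      ((hasDerivAt_id t).const_mul 2)).congr_deriv (by rw [mul_one])).const_mul _
  simp only [integral_Ueps_sq_mul_Ueps_sq hε ν]
  refine ⟨fun t ht => ⟨(hder t).differentiableAt, ?_⟩, fun s hs t ht hst => ?_⟩
  · rw [(hder t).deriv]
    exact mul_neg_of_pos_of_neg hK
      (mul_neg_of_neg_of_pos (deriv_autocorr_neg volume hE hb hν₀ (by positivity)) two_pos)
  · refine mul_lt_mul_of_pos_left (autocorr_strictAntiOn volume hE hb hν₀ ?_ ?_ (by linarith)) hK
    · simpa using hs
    · simpa using ht
end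
end

section
/- For every ε > 0, the three functions N(t) := ∫_{ℝ⁴} Û_{ε,te₁}(x)⁴ dx, G(t) := ∫_{ℝ⁴} ∇U_{ε,te₁}(x)·∇U_{ε,−te₁}(x) dx and C(t) := ∫_{ℝ⁴} U_{ε,te₁}(x)²·U_{ε,−te₁}(x)² dx are differentiable at every t > 0 and satisfy the identity N'(t) = (8/S₄)·G'(t) + 6·C'(t). -/
noncomputable section

open MeasureTheory Real RealInnerProductSpace

/-- `N(t) = ∫ Û_{ε,te₁}⁴`. -/
def Nfun (ε t : ℝ) : ℝ := ∫ x : E4, Uhat ε (t • e1) x ^ 4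

/-- `G(t) = ∫ ∇U_{ε,te₁} · ∇U_{ε,-te₁}`. -/
def Gfun (ε t : ℝ) : ℝ :=
  ∫ x : E4, ⟪gradient (Ueps ε (t • e1)) x, gradient (Ueps ε (-(t • e1))) x⟫

/-- `C(t) = ∫ U_{ε,te₁}² U_{ε,-te₁}²`. -/
def Cfun (ε t : ℝ) : ℝ := ∫ x : E4, Ueps ε (t • e1) x ^ 2 * Ueps ε (-(t • e1)) x ^ 2

/-!
Translating by `b = t e₁` turns `C(t)` into `∫ u(y)² u(y+z)²` and, after expanding the fourth
power and using the evenness of `u = U_{ε,0}`, `N(t)` into `2∫u⁴ + 8∫u³u(·+z) + 6∫u²u(·+z)²`,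
with `z = 2t e₁`. Since `-Δu = S₄ u³`, integrating by parts coordinatewise gives
`G(t) = S₄ ∫ u³ u(·+z)`. Hence `N = const + (8/S₄) G + 6 C` as functions of `t`, and the identity
for the derivatives follows once `z ↦ ∫ u^p u(·+z)^k` is known to be differentiable. That is
differentiation under the integral sign: `u` and `∇u` are `O((1 + |x|)⁻²)`, a translate
`(1 + |x + z|)⁻¹` is at most `(1 + |z|)(1 + |x|)⁻¹`, and `(1 + |x|)⁻ᵐ` is integrable on `ℝ⁴`
for `m > 4`.
-/

namespace DoubleBubble

open Asymptotics Filter Metric Module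

section Weight

variable {E : Type*} [NormedAddCommGroup E]

def invBracket (x : E) : ℝ := (1 + ‖x‖)⁻¹

lemma invBracket_pos (x : E) : 0 < invBracket x := by
  unfold invBracket; positivity

@[simp]
lemma norm_invBracket (x : E) : ‖invBracket x‖ = invBracket x :=
  Real.norm_of_nonneg (invBracket_pos x).le

lemma invBracket_le_one (x : E) : invBracket x ≤ 1 :=
  inv_le_one_of_one_le₀ (le_add_of_nonneg_right (norm_nonneg x))

lemma norm_mul_invBracket_le_one (x : E) : ‖x‖ * invBracket x ≤ 1 := by
  rw [invBracket, ← div_eq_mul_inv, div_le_one (by positivity)]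
  linarith

lemma invBracket_add_le (x z : E) : invBracket (x + z) ≤ (1 + ‖z‖) * invBracket x := by
  have hx : ‖x‖ ≤ ‖x + z‖ + ‖z‖ := by simpa using norm_sub_le (x + z) z
  rw [invBracket, invBracket, ← div_eq_mul_inv, inv_le_iff_one_le_mul₀' (by positivity),
    mul_div_assoc', one_le_div (by positivity)]
  nlinarith [norm_nonneg x, norm_nonneg z, norm_nonneg (x + z)]

lemma isBigO_invBracket_pow_of_le {m n : ℕ} (hmn : m ≤ n) :
    (fun x : E => invBracket x ^ n) =O[⊤] fun x => invBracket x ^ m := by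
  refine isBigO_top.2 ⟨1, fun x => ?_⟩
  have h0 := (invBracket_pos x).le
  rw [one_mul, Real.norm_of_nonneg (by positivity), Real.norm_of_nonneg (by positivity)]
  exact pow_le_pow_of_le_one h0 (invBracket_le_one x) hmn

lemma isBigO_comp_add_const {F : Type*} [Norm F] {g : E → F} {m : ℕ}
    (hg : g =O[⊤] fun x => invBracket x ^ m) (z : E) :
    (fun x => g (x + z)) =O[⊤] fun x => invBracket x ^ m := by
  refine (hg.comp_tendsto tendsto_top).trans (isBigO_top.2 ⟨(1 + ‖z‖) ^ m, fun x => ?_⟩)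
  have h0 := (invBracket_pos (x + z)).le
  rw [Function.comp_apply, Real.norm_of_nonneg (by positivity),
    Real.norm_of_nonneg (by have := invBracket_pos x; positivity), ← mul_pow]
  exact pow_le_pow_left₀ h0 (invBracket_add_le x z) m

variable [NormedSpace ℝ E] [FiniteDimensional ℝ E] [MeasurableSpace E] [BorelSpace E]
  {μ : Measure E} [μ.IsAddHaarMeasure]

lemma integrable_invBracket_pow {m : ℕ} (hm : finrank ℝ E < m) :
    Integrable (fun x : E => invBracket x ^ m) μ := by
  refine (integrable_one_add_norm (μ := μ) (r := m) (by exact_mod_cast hm)).congr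
    (ae_of_all _ fun x => ?_)
  simp only [Real.rpow_neg (by positivity : (0 : ℝ) ≤ 1 + ‖x‖), Real.rpow_natCast, invBracket,
    inv_pow]

lemma integrable_of_isBigO_invBracket {F : Type*} [NormedAddCommGroup F] {f : E → F} {m : ℕ}
    (hf : Continuous f) (hm : finrank ℝ E < m) (hfm : f =O[⊤] fun x => invBracket x ^ m) :
    Integrable f μ :=
  hfm.integrable hf.aestronglyMeasurable (integrable_invBracket_pow hm)

lemma integrable_mul_comp_add {f g : E → ℝ} {a b : ℕ} (hab : finrank ℝ E < a + b)
    (hf : Continuous f) (hg : Continuous g) (hfa : f =O[⊤] fun x => invBracket x ^ a)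
    (hgb : g =O[⊤] fun x => invBracket x ^ b) (z : E) :
    Integrable (fun y => f y * g (y + z)) μ :=
  integrable_of_isBigO_invBracket (hf.mul (hg.comp (continuous_add_const z))) hab
    (by simpa only [pow_add] using hfa.mul (isBigO_comp_add_const hgb z))

theorem hasFDerivAt_integral_mul_comp_add {f g : E → ℝ} {g' : E → E →L[ℝ] ℝ} {a b : ℕ}
    (hab : finrank ℝ E < a + b) (hf : Continuous f) (hg : ∀ x, HasFDerivAt g (g' x) x)
    (hg' : Continuous g') (hfa : f =O[⊤] fun x => invBracket x ^ a)
    (hgb : g =O[⊤] fun x => invBracket x ^ b) (hg'b : g' =O[⊤] fun x => invBracket x ^ b)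
    (z₀ : E) :
    HasFDerivAt (fun z => ∫ y, f y * g (y + z) ∂μ) (∫ y, f y • g' (y + z₀) ∂μ) z₀ := by
  have hgc : Continuous g := continuous_iff_continuousAt.2 fun x => (hg x).continuousAt
  have hF : ∀ z, Continuous fun y => f y * g (y + z) := fun z => hf.mul (by fun_prop)
  obtain ⟨Cf, hCf0, hCf⟩ := hfa.exists_pos
  obtain ⟨Cg, hCg0, hCg⟩ := hg'b.exists_pos
  simp only [isBigOWith_top, norm_pow, norm_invBracket] at hCf hCg
  refine hasFDerivAt_integral_of_dominated_of_fderiv_le (ball_mem_nhds z₀ one_pos)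
    (bound := fun y => Cf * Cg * (2 + ‖z₀‖) ^ b * invBracket y ^ (a + b))
    (Eventually.of_forall fun z => (hF z).aestronglyMeasurable)
    (integrable_mul_comp_add hab hf hgc hfa hgb z₀)
    (F' := fun z y => f y • g' (y + z))
    ((by fun_prop : Continuous fun y => f y • g' (y + z₀)).aestronglyMeasurable)
    (ae_of_all _ fun y z hz => ?_) ((integrable_invBracket_pow hab).const_mul _)
    (ae_of_all _ fun y z _ => ?_)
  · have hR : invBracket (y + z) ≤ (2 + ‖z₀‖) * invBracket y := by
      refine (invBracket_add_le y z).trans (mul_le_mul_of_nonneg_right ?_ (invBracket_pos y).le)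
      have := norm_le_norm_add_norm_sub' z z₀
      rw [mem_ball, dist_eq_norm] at hz
      linarith
    have hwy := (invBracket_pos y).le
    calc ‖f y • g' (y + z)‖ ≤ (Cf * invBracket y ^ a) * (Cg * invBracket (y + z) ^ b) := by
          rw [norm_smul]
          exact mul_le_mul (hCf y) (hCg _) (norm_nonneg _) (by positivity)
      _ ≤ (Cf * invBracket y ^ a) * (Cg * ((2 + ‖z₀‖) * invBracket y) ^ b) := by
          gcongr
          exact (invBracket_pos _).le
      _ = Cf * Cg * (2 + ‖z₀‖) ^ b * invBracket y ^ (a + b) := by rw [mul_pow]; ring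
  · simpa using ((hg (y + z)).comp z ((hasFDerivAt_id z).const_add y)).const_mul (f y)

end Weight

lemma integral_comp_sub_sub {G : Type*} [AddGroup G] [MeasurableSpace G] [MeasurableAdd G]
    {μ : Measure G} [μ.IsAddRightInvariant] (f : G → G → ℝ) (b c : G) :
    ∫ x, f (x - b) (x - c) ∂μ = ∫ y, f y (y + (b - c)) ∂μ := by
  rw [← integral_add_right_eq_self (fun x => f (x - b) (x - c)) b]
  congr 1
  ext y
  simp only [add_sub_cancel_right, add_sub_assoc]

section Profile

variable (ε : ℝ)

/- `U_{ε,0} = ε⁻¹ c₄ / bubbleDenom ε` has gradient `gradCoeff ε x • x`; `bubbleDeriv ε v` and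
`bubbleDeriv2 ε v` are its first and second derivatives in the direction `v`. -/
def bubbleDenom (x : E4) : ℝ := 1 + ε⁻¹ ^ 2 * ‖x‖ ^ 2

def gradCoeff (x : E4) : ℝ := -2 * ε⁻¹ ^ 3 * c4 * (bubbleDenom ε x)⁻¹ ^ 2

def bubbleDeriv (v x : E4) : ℝ := gradCoeff ε x * ⟪x, v⟫

def bubbleDeriv2 (v x : E4) : ℝ :=
  8 * ε⁻¹ ^ 5 * c4 * (bubbleDenom ε x)⁻¹ ^ 3 * ⟪x, v⟫ ^ 2 + gradCoeff ε x * ⟪v, v⟫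

lemma one_le_bubbleDenom (x : E4) : 1 ≤ bubbleDenom ε x :=
  le_add_of_nonneg_right (by positivity)

lemma bubbleDenom_pos (x : E4) : 0 < bubbleDenom ε x :=
  one_pos.trans_le (one_le_bubbleDenom ε x)

lemma continuous_inv_bubbleDenom : Continuous fun x => (bubbleDenom ε x)⁻¹ :=
  (by unfold bubbleDenom; fun_prop : Continuous (bubbleDenom ε)).inv₀
    fun x => (bubbleDenom_pos ε x).ne'

lemma continuous_gradCoeff : Continuous (gradCoeff ε) :=
  continuous_const.mul ((continuous_inv_bubbleDenom ε).pow 2)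

lemma Ueps_apply (b x : E4) : Ueps ε b x = ε⁻¹ * c4 * (bubbleDenom ε (x - b))⁻¹ := by
  simp only [Ueps, Ubub, bubbleDenom, norm_smul, mul_pow, Real.norm_eq_abs, sq_abs]
  ring

lemma Ueps_eq_comp_sub (b x : E4) : Ueps ε b x = Ueps ε 0 (x - b) := by
  simp [Ueps]

lemma Ueps_zero_neg (x : E4) : Ueps ε 0 (-x) = Ueps ε 0 x := by
  simp [Ueps_apply, bubbleDenom]

lemma hasFDerivAt_bubbleDenom (x : E4) :
    HasFDerivAt (bubbleDenom ε) ((2 * ε⁻¹ ^ 2) • innerSL ℝ x) x := by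
  refine (((hasFDerivAt_id x).norm_sq.const_mul (ε⁻¹ ^ 2)).const_add 1).congr_fderiv ?_
  ext v
  simp
  ring

lemma hasFDerivAt_inv_bubbleDenom_pow (n : ℕ) (x : E4) :
    HasFDerivAt (fun x => (bubbleDenom ε x)⁻¹ ^ n)
      ((-2 * n * ε⁻¹ ^ 2 * (bubbleDenom ε x)⁻¹ ^ (n + 1)) • innerSL ℝ x) x := by
  refine (((hasDerivAt_inv (bubbleDenom_pos ε x).ne').comp_hasFDerivAt x
    (hasFDerivAt_bubbleDenom ε x)).pow n).congr_fderiv ?_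
  rw [smul_smul, smul_smul]
  congr 1
  rcases n with _ | n
  · simp
  · simp only [Function.comp_apply, nsmul_eq_mul, Nat.add_sub_cancel]
    field_simp
    ring

lemma hasFDerivAt_Ueps_zero (x : E4) :
    HasFDerivAt (Ueps ε 0) (gradCoeff ε x • innerSL ℝ x) x := by
  have hu : Ueps ε 0 = fun x => ε⁻¹ * c4 * (bubbleDenom ε x)⁻¹ ^ 1 :=
    funext fun x => by simp [Ueps_apply]
  rw [hu]
  refine ((hasFDerivAt_inv_bubbleDenom_pow ε 1 x).const_mul _).congr_fderiv ?_
  rw [smul_smul, gradCoeff]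
  congr 1
  ring

lemma continuous_Ueps_zero : Continuous (Ueps ε 0) :=
  continuous_iff_continuousAt.2 fun x => (hasFDerivAt_Ueps_zero ε x).continuousAt

lemma hasFDerivAt_gradCoeff (x : E4) :
    HasFDerivAt (gradCoeff ε) ((8 * ε⁻¹ ^ 5 * c4 * (bubbleDenom ε x)⁻¹ ^ 3) • innerSL ℝ x) x := by
  refine ((hasFDerivAt_inv_bubbleDenom_pow ε 2 x).const_mul (-2 * ε⁻¹ ^ 3 * c4)).congr_fderiv ?_
  rw [smul_smul]
  congr 1
  ring

lemma hasLineDerivAt_bubbleDeriv (v x : E4) :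
    HasLineDerivAt ℝ (bubbleDeriv ε v) (bubbleDeriv2 ε v x) x v := by
  have hv : (fun y : E4 => ⟪y, v⟫) = innerSL ℝ v := funext fun y => real_inner_comm v y
  have h := ((hasFDerivAt_gradCoeff ε x).mul (hv ▸ (innerSL ℝ v).hasFDerivAt)).hasLineDerivAt v
  simp only [add_apply, smul_apply, innerSL_apply_apply, smul_eq_mul] at h
  rwa [show gradCoeff ε x * ⟪v, v⟫ + ⟪x, v⟫ * (8 * ε⁻¹ ^ 5 * c4 * (bubbleDenom ε x)⁻¹ ^ 3 * ⟪x, v⟫)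
    = bubbleDeriv2 ε v x by rw [bubbleDeriv2]; ring] at h

lemma gradient_Ueps (b x : E4) : gradient (Ueps ε b) x = gradCoeff ε (x - b) • (x - b) := by
  refine HasGradientAt.gradient (hasGradientAt_iff_hasFDerivAt.2 ?_)
  have hu : Ueps ε b = fun x => Ueps ε 0 (x - b) := funext (Ueps_eq_comp_sub ε b)
  rw [hu]
  refine ((hasFDerivAt_Ueps_zero ε (x - b)).comp x ((hasFDerivAt_id x).sub_const b)).congr_fderiv ?_
  ext v
  simp

lemma S4_mul_c4_sq : S4 * c4 ^ 2 = 8 := by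
  have : 0 < c4 := Real.rpow_pos_of_pos (by positivity) _
  rw [S4]
  field_simp

lemma S4_ne_zero : S4 ≠ 0 :=
  left_ne_zero_of_mul (by rw [S4_mul_c4_sq]; norm_num : S4 * c4 ^ 2 ≠ 0)

/- The Yamabe equation `-ΔU = S₄ U³`: summing `⟪bᵢ, bᵢ⟫ = 1` over the basis is where the
dimension `4` enters. -/
lemma sum_bubbleDeriv2 {ι : Type*} [Fintype ι] (b : OrthonormalBasis ι ℝ E4) (x : E4) :
    ∑ i, bubbleDeriv2 ε (b i) x = -S4 * Ueps ε 0 x ^ 3 := by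
  have hsq : ∑ i, ⟪x, b i⟫ ^ 2 = ‖x‖ ^ 2 := by
    simp_rw [sq, ← real_inner_self_eq_norm_mul_norm, ← b.sum_inner_mul_inner x x,
      real_inner_comm x]
  have hcard : ∑ i, ⟪b i, b i⟫ = 4 := by
    simp [b.orthonormal.1, ← finrank_eq_card_basis b.toBasis]
  have hq : ε⁻¹ ^ 2 * ‖x‖ ^ 2 = bubbleDenom ε x - 1 := by rw [bubbleDenom]; ring
  have hr : bubbleDenom ε x * (bubbleDenom ε x)⁻¹ = 1 := mul_inv_cancel₀ (bubbleDenom_pos ε x).ne'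
  simp only [bubbleDeriv2, Finset.sum_add_distrib, ← Finset.mul_sum, hsq, hcard, Ueps_apply,
    sub_zero, gradCoeff]
  rw [show -S4 * (ε⁻¹ * c4 * (bubbleDenom ε x)⁻¹) ^ 3
    = -(S4 * c4 ^ 2) * (ε⁻¹ ^ 3 * c4 * (bubbleDenom ε x)⁻¹ ^ 3) by ring, S4_mul_c4_sq]
  linear_combination (8 * ε⁻¹ ^ 3 * c4 * (bubbleDenom ε x)⁻¹ ^ 3) * hq
    + (8 * ε⁻¹ ^ 3 * c4 * (bubbleDenom ε x)⁻¹ ^ 2) * hr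

end Profile

section Decay

variable {ε : ℝ}

lemma isBigO_inv_bubbleDenom (hε : ε ≠ 0) :
    (fun x => (bubbleDenom ε x)⁻¹) =O[⊤] fun x => invBracket x ^ 2 := by
  refine isBigO_of_le' (c := 2 * (1 + ε ^ 2)) ⊤ fun x => ?_
  have hεε : ε ^ 2 * ε⁻¹ ^ 2 = 1 := by field_simp
  rw [Real.norm_of_nonneg (inv_nonneg.2 (bubbleDenom_pos ε x).le), norm_pow, norm_invBracket,
    invBracket, inv_pow, ← div_eq_mul_inv, le_div_iff₀ (by positivity), inv_mul_eq_div,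
    div_le_iff₀ (bubbleDenom_pos ε x), bubbleDenom]
  nlinarith [sq_nonneg (‖x‖ - 1), sq_nonneg (ε * ‖x‖), sq_nonneg ε, norm_nonneg x]

lemma isBigO_norm_mul_inv_bubbleDenom (hε : ε ≠ 0) :
    (fun x => ‖x‖ * (bubbleDenom ε x)⁻¹) =O[⊤] fun x => invBracket x ^ 1 := by
  refine ((isBigO_refl (fun x : E4 => ‖x‖) ⊤).mul (isBigO_inv_bubbleDenom hε)).trans
    (isBigO_of_le' (c := 1) ⊤ fun x => ?_)
  have hw := (invBracket_pos x).le
  rw [norm_mul, norm_norm, norm_pow, norm_pow, norm_invBracket, one_mul, pow_one, sq,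
    ← mul_assoc]
  exact mul_le_of_le_one_left hw (norm_mul_invBracket_le_one x)

lemma isBigO_Ueps_zero (hε : ε ≠ 0) : Ueps ε 0 =O[⊤] fun x => invBracket x ^ 2 :=
  ((isBigO_inv_bubbleDenom hε).const_mul_left (ε⁻¹ * c4)).congr_left fun x => by
    simp [Ueps_apply]

lemma isBigO_fderiv_Ueps_zero (hε : ε ≠ 0) :
    (fun x => gradCoeff ε x • innerSL ℝ x) =O[⊤] fun x => invBracket x ^ 3 := by
  refine (isBigO_of_le' (c := |-2 * ε⁻¹ ^ 3 * c4|) ⊤ fun x => ?_).trans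
    (((isBigO_inv_bubbleDenom hε).mul (isBigO_norm_mul_inv_bubbleDenom hε)).congr_right
      fun x => by ring)
  simp only [norm_smul, innerSL_apply_norm, gradCoeff, Real.norm_eq_abs, abs_mul, abs_pow,
    abs_norm]
  exact le_of_eq (by ring)

lemma isBigO_bubbleDeriv (hε : ε ≠ 0) (v : E4) :
    bubbleDeriv ε v =O[⊤] fun x => invBracket x ^ 3 := by
  refine (isBigO_of_le' (c := ‖v‖) ⊤ fun x => ?_).trans (isBigO_fderiv_Ueps_zero hε)
  have := (gradCoeff ε x • innerSL ℝ x).le_opNorm v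
  rw [mul_comm]
  simpa [bubbleDeriv] using this

lemma isBigO_bubbleDeriv2 (hε : ε ≠ 0) (v : E4) :
    bubbleDeriv2 ε v =O[⊤] fun x => invBracket x ^ 4 := by
  have hinner : (fun x => (bubbleDenom ε x)⁻¹ * ⟪x, v⟫) =O[⊤] fun x => invBracket x ^ 1 := by
    refine (isBigO_of_le' (c := ‖v‖) ⊤ fun x => ?_).trans (isBigO_norm_mul_inv_bubbleDenom hε)
    have hq := inv_nonneg.2 (bubbleDenom_pos ε x).le
    rw [norm_mul, norm_mul, norm_norm, Real.norm_of_nonneg hq, Real.norm_eq_abs]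
    nlinarith [abs_real_inner_le_norm x v, norm_nonneg v, norm_nonneg x]
  have h1 : (fun x => 8 * ε⁻¹ ^ 5 * c4 * ((bubbleDenom ε x)⁻¹ * ((bubbleDenom ε x)⁻¹ * ⟪x, v⟫) ^ 2))
      =O[⊤] fun x => invBracket x ^ 4 :=
    (((isBigO_inv_bubbleDenom hε).mul (hinner.pow 2)).const_mul_left _).congr_right
      fun x => by ring
  have h2 : (fun x => -2 * ε⁻¹ ^ 3 * c4 * ⟪v, v⟫ * (bubbleDenom ε x)⁻¹ ^ 2)
      =O[⊤] fun x => invBracket x ^ 4 :=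
    (((isBigO_inv_bubbleDenom hε).pow 2).const_mul_left _).congr_right fun x => by ring
  exact (h1.add h2).congr_left fun x => by rw [bubbleDeriv2, gradCoeff]; ring

end Decay

section Green

variable {ε : ℝ}

lemma continuous_bubbleDeriv (v : E4) : Continuous (bubbleDeriv ε v) := by
  have := continuous_gradCoeff ε
  unfold bubbleDeriv
  fun_prop

lemma continuous_bubbleDeriv2 (v : E4) : Continuous (bubbleDeriv2 ε v) := by
  have := continuous_gradCoeff ε
  have := continuous_inv_bubbleDenom ε
  unfold bubbleDeriv2
  fun_prop

lemma integrable_bubbleDeriv_mul_comp_add (hε : ε ≠ 0) (v z : E4) :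
    Integrable fun y => bubbleDeriv ε v y * bubbleDeriv ε v (y + z) :=
  integrable_mul_comp_add (a := 3) (b := 3) (by simp) (continuous_bubbleDeriv v)
    (continuous_bubbleDeriv v) (isBigO_bubbleDeriv hε v) (isBigO_bubbleDeriv hε v) z

lemma integrable_bubbleDeriv2_mul_comp_add (hε : ε ≠ 0) (v z : E4) :
    Integrable fun y => bubbleDeriv2 ε v y * Ueps ε 0 (y + z) :=
  integrable_mul_comp_add (a := 4) (b := 2) (by simp) (continuous_bubbleDeriv2 v)
    (continuous_Ueps_zero ε) (isBigO_bubbleDeriv2 hε v) (isBigO_Ueps_zero hε) z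

lemma integral_bubbleDeriv_mul_comp_add (hε : ε ≠ 0) (v z : E4) :
    ∫ y, bubbleDeriv ε v y * bubbleDeriv ε v (y + z)
      = -∫ y, bubbleDeriv2 ε v y * Ueps ε 0 (y + z) := by
  have hg (y : E4) :
      HasLineDerivAt ℝ (fun y => Ueps ε 0 (y + z)) (bubbleDeriv ε v (y + z)) y v := by
    have hF : HasFDerivAt (fun y => Ueps ε 0 (y + z))
        (gradCoeff ε (y + z) • innerSL ℝ (y + z)) y := by
      refine ((hasFDerivAt_Ueps_zero ε (y + z)).comp y
        ((hasFDerivAt_id y).add_const z)).congr_fderiv ?_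
      ext
      simp
    have := hF.hasLineDerivAt v
    simp only [smul_apply, innerSL_apply_apply, smul_eq_mul] at this
    exact this
  have h := integral_bilinear_hasLineDerivAt_right_eq_neg_left_of_integrable
    (μ := volume) (B := ContinuousLinearMap.mul ℝ ℝ)
    (integrable_bubbleDeriv2_mul_comp_add hε v z) (integrable_bubbleDeriv_mul_comp_add hε v z)
    (integrable_mul_comp_add (a := 3) (b := 2) (by simp) (continuous_bubbleDeriv v)
      (continuous_Ueps_zero ε) (isBigO_bubbleDeriv hε v) (isBigO_Ueps_zero hε) z)
    (fun x _ => hasLineDerivAt_bubbleDeriv ε v x) (fun y _ => hg y)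
  simpa using h

theorem integral_inner_gradient_Ueps_zero (hε : ε ≠ 0) (z : E4) :
    ∫ y, ⟪gradCoeff ε y • y, gradCoeff ε (y + z) • (y + z)⟫
      = S4 * ∫ y, Ueps ε 0 y ^ 3 * Ueps ε 0 (y + z) := by
  let b := stdOrthonormalBasis ℝ E4
  calc ∫ y, ⟪gradCoeff ε y • y, gradCoeff ε (y + z) • (y + z)⟫
      = ∫ y, ∑ i, bubbleDeriv ε (b i) y * bubbleDeriv ε (b i) (y + z) := by
        congr 1
        ext y
        rw [← b.sum_inner_mul_inner]
        simp only [bubbleDeriv, real_inner_smul_left, real_inner_smul_right,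
          real_inner_comm (y + z)]
    _ = ∑ i, -∫ y, bubbleDeriv2 ε (b i) y * Ueps ε 0 (y + z) := by
        rw [integral_finsetSum _ fun i _ => integrable_bubbleDeriv_mul_comp_add hε _ z]
        exact Finset.sum_congr rfl fun i _ => integral_bubbleDeriv_mul_comp_add hε _ z
    _ = -∫ y, (∑ i, bubbleDeriv2 ε (b i) y) * Ueps ε 0 (y + z) := by
        simp_rw [Finset.sum_neg_distrib, Finset.sum_mul]
        rw [integral_finsetSum _ fun i _ => integrable_bubbleDeriv2_mul_comp_add hε _ z]
    _ = S4 * ∫ y, Ueps ε 0 y ^ 3 * Ueps ε 0 (y + z) := by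
        simp_rw [sum_bubbleDeriv2]
        rw [← integral_const_mul, ← integral_neg]
        congr 1
        ext y
        ring

end Green

section Interaction

variable (ε : ℝ)

def interaction (p k : ℕ) (z : E4) : ℝ := ∫ y, Ueps ε 0 y ^ p * Ueps ε 0 (y + z) ^ k

lemma interaction_comm (p k : ℕ) (z : E4) : interaction ε p k z = interaction ε k p z := by
  calc interaction ε p k z
      = ∫ y, Ueps ε 0 (-(y + z)) ^ p * Ueps ε 0 (-(y + z) + z) ^ k := by
        rw [integral_add_right_eq_self (fun y => Ueps ε 0 (-y) ^ p * Ueps ε 0 (-y + z) ^ k) z,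
          integral_neg_eq_self (fun y => Ueps ε 0 y ^ p * Ueps ε 0 (y + z) ^ k), interaction]
    _ = interaction ε k p z := by
        rw [interaction]
        congr 1
        ext y
        rw [show -(y + z) + z = -y by abel, Ueps_zero_neg, Ueps_zero_neg, mul_comm]

variable {ε}

lemma integrable_interaction_integrand (hε : ε ≠ 0) {p k : ℕ} (hpk : 2 < p + k) (z : E4) :
    Integrable fun y => Ueps ε 0 y ^ p * Ueps ε 0 (y + z) ^ k := by
  refine integrable_mul_comp_add (a := 2 * p) (b := 2 * k) (by simp; omega)
    ((continuous_Ueps_zero ε).pow p) ((continuous_Ueps_zero ε).pow k)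
    (((isBigO_Ueps_zero hε).pow p).congr_right fun x => by ring)
    (((isBigO_Ueps_zero hε).pow k).congr_right fun x => by ring) z

lemma differentiable_interaction (hε : ε ≠ 0) {p k : ℕ} (hpk : 2 < p + k) :
    Differentiable ℝ (interaction ε p k) := by
  have hg' : (fun y => (k • Ueps ε 0 y ^ (k - 1)) • (gradCoeff ε y • innerSL ℝ y))
      =O[⊤] fun y => invBracket y ^ (2 * k) := by
    have h := (((isBigO_Ueps_zero hε).pow (k - 1)).const_mul_left (k : ℝ)).smul
      (isBigO_fderiv_Ueps_zero hε)
    refine (h.congr_left fun y => by rw [nsmul_eq_mul]).trans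
      ((isBigO_invBracket_pow_of_le (show 2 * k ≤ 2 * (k - 1) + 3 by omega)).congr_left
        fun y => by rw [smul_eq_mul, ← pow_mul, ← pow_add])
  intro z
  refine (hasFDerivAt_integral_mul_comp_add (a := 2 * p) (b := 2 * k) (by simp; omega)
    ((continuous_Ueps_zero ε).pow p) (fun y => (hasFDerivAt_Ueps_zero ε y).pow k) ?_
    (((isBigO_Ueps_zero hε).pow p).congr_right fun x => by ring)
    (((isBigO_Ueps_zero hε).pow k).congr_right fun x => by ring) hg' z).differentiableAt
  have := continuous_Ueps_zero ε
  have := continuous_gradCoeff ε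
  fun_prop

lemma integral_add_pow_four (hε : ε ≠ 0) (z : E4) :
    ∫ y, (Ueps ε 0 y + Ueps ε 0 (y + z)) ^ 4
      = 2 * (∫ y, Ueps ε 0 y ^ 4) + 8 * interaction ε 3 1 z + 6 * interaction ε 2 2 z := by
  have hint (m : ℕ) (hm : m ∈ Finset.range 5) :
      Integrable fun y => Ueps ε 0 y ^ m * Ueps ε 0 (y + z) ^ (4 - m) * (Nat.choose 4 m : ℝ) :=
    (integrable_interaction_integrand hε (by simp at hm; omega) z).mul_const _
  calc ∫ y, (Ueps ε 0 y + Ueps ε 0 (y + z)) ^ 4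
      = ∑ m ∈ Finset.range 5, interaction ε m (4 - m) z * (Nat.choose 4 m : ℝ) := by
        simp_rw [add_pow]
        rw [integral_finsetSum _ hint]
        simp_rw [integral_mul_const, interaction]
    _ = 2 * (∫ y, Ueps ε 0 y ^ 4) + 8 * interaction ε 3 1 z + 6 * interaction ε 2 2 z := by
        have h40 : interaction ε 4 0 z = ∫ y, Ueps ε 0 y ^ 4 := by simp [interaction]
        simp only [Finset.sum_range_succ, Finset.sum_range_zero, interaction_comm ε 0 4,
          interaction_comm ε 1 3, h40]
        norm_num [Nat.choose]
        ring

end Interaction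

section Reduction

variable {ε : ℝ}

lemma Cfun_eq (t : ℝ) : Cfun ε t = interaction ε 2 2 (t • e1 - -(t • e1)) := by
  simp only [Cfun, Ueps_eq_comp_sub ε (t • e1), Ueps_eq_comp_sub ε (-(t • e1))]
  exact integral_comp_sub_sub (fun y y' => Ueps ε 0 y ^ 2 * Ueps ε 0 y' ^ 2) _ _

lemma Gfun_eq (hε : ε ≠ 0) (t : ℝ) :
    Gfun ε t = S4 * interaction ε 3 1 (t • e1 - -(t • e1)) := by
  simp only [Gfun, gradient_Ueps]
  rw [integral_comp_sub_sub (fun y y' => ⟪gradCoeff ε y • y, gradCoeff ε y' • y'⟫),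
    integral_inner_gradient_Ueps_zero hε]
  simp [interaction]

lemma Nfun_eq (hε : ε ≠ 0) (t : ℝ) :
    Nfun ε t = 2 * (∫ y, Ueps ε 0 y ^ 4) + 8 * interaction ε 3 1 (t • e1 - -(t • e1))
      + 6 * interaction ε 2 2 (t • e1 - -(t • e1)) := by
  simp only [Nfun, Uhat, Ueps_eq_comp_sub ε (t • e1), Ueps_eq_comp_sub ε (-(t • e1))]
  rw [integral_comp_sub_sub (fun y y' => (Ueps ε 0 y + Ueps ε 0 y') ^ 4),
    integral_add_pow_four hε]

end Reduction

end DoubleBubble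

open DoubleBubble in
/-- For every `ε > 0`, the functions `N`, `G`, `C` are differentiable at every `t > 0`
and satisfy `N'(t) = (8/S₄) G'(t) + 6 C'(t)`. -/
theorem stmt5 (ε : ℝ) (hε : 0 < ε) :
    ∀ t : ℝ, 0 < t →
      DifferentiableAt ℝ (Nfun ε) t ∧ DifferentiableAt ℝ (Gfun ε) t ∧
      DifferentiableAt ℝ (Cfun ε) t ∧
      deriv (Nfun ε) t = (8 / S4) * deriv (Gfun ε) t + 6 * deriv (Cfun ε) t := by
  intro t _
  have hz : Differentiable ℝ fun s : ℝ => s • e1 - -(s • e1) := by fun_prop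
  obtain ⟨a, hA⟩ : ∃ a, HasDerivAt (fun s => interaction ε 3 1 (s • e1 - -(s • e1))) a t :=
    ⟨_, ((differentiable_interaction hε.ne' (by norm_num)).comp hz t).hasDerivAt⟩
  obtain ⟨c, hC⟩ : ∃ c, HasDerivAt (fun s => interaction ε 2 2 (s • e1 - -(s • e1))) c t :=
    ⟨_, ((differentiable_interaction hε.ne' (by norm_num)).comp hz t).hasDerivAt⟩
  have hN : HasDerivAt (Nfun ε) (8 * a + 6 * c) t := by
    rw [funext (Nfun_eq hε.ne')]
    exact ((hA.const_mul 8).const_add _).add (hC.const_mul 6)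
  have hG : HasDerivAt (Gfun ε) (S4 * a) t := by
    rw [funext (Gfun_eq hε.ne')]
    exact hA.const_mul S4
  have hC' : HasDerivAt (Cfun ε) c t := by
    rw [funext Cfun_eq]
    exact hC
  refine ⟨hN.differentiableAt, hG.differentiableAt, hC'.differentiableAt, ?_⟩
  rw [hN.deriv, hG.deriv, hC'.deriv]
  field_simp [S4_ne_zero]
end
end

section
/- Let n ≥ 1 and k ≥ 1 be integers and let a ∈ C^∞(ℝ × ℝⁿ; ℝ). Define b : ℝⁿ → ℝ by b(x) := |x|^k · a(|x|, x/|x|) for x ≠ 0 and b(0) := 0. Then b is (k−1)-times continuously differentiable on ℝⁿ and its (k−1)-th derivative is Lipschitz on every compact subset of ℝⁿ (i.e. b ∈ C^{k−1,1}_{loc}(ℝⁿ)). If moreover a(t,y) does not depend on the first variable t, then the (k−1)-th derivative of b is Lipschitz on all of ℝⁿ (i.e. b ∈ C^{k−1,1}(ℝⁿ)). -/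
/-!
Write `x = t • ω` with `t = ‖x‖` and `‖ω‖ = 1`. The profile
`Φ (t, y) = ‖y‖ ^ k * a (t * ‖y‖, ‖y‖⁻¹ • y)` is smooth wherever `y ≠ 0`, including `t = 0`, and
`b (t • y) = t ^ k * Φ (t, y)`. Differentiating `m` times in `y` at `ω` gives
`‖D^m b x‖ = t ^ (k - m) * ‖D_y^m Φ (t, ω)‖`, and the last factor is bounded for `(t, ω)` in the
compact set `[0, R] × S`. Hence `D^m b x = O(‖x‖ ^ (k - m))` at `0`, which makes `b` of class
`C^{k-1}`, and `D^k b` is bounded on bounded sets off `0`; the mean value inequality on segments,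
split at `0` when they pass through it, makes `D^{k-1} b` Lipschitz on convex bounded sets. If `a`
ignores `t`, then `b` is positively homogeneous of degree `k`, so the bound on `D^k b` is global.
-/

open Asymptotics Filter Set Topology Metric

section General

variable {𝕜 : Type*} [NontriviallyNormedField 𝕜] {E F : Type*}
  [NormedAddCommGroup E] [NormedSpace 𝕜 E] [NormedAddCommGroup F] [NormedSpace 𝕜 F]

theorem iteratedFDeriv_comp_const_smul_of_ne_zero (f : E → F) {c : 𝕜} (hc : c ≠ 0) (m : ℕ) (x : E) :
    iteratedFDeriv 𝕜 m (fun y => f (c • y)) x = c ^ m • iteratedFDeriv 𝕜 m f (c • x) := by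
  let L : E ≃L[𝕜] E := ContinuousLinearEquiv.smulLeft (Units.mk0 c hc)
  have hL : ∀ y, L y = c • y := fun y => rfl
  have h := L.iteratedFDerivWithin_comp_right f uniqueDiffOn_univ (mem_univ (L x)) m
  simp only [preimage_univ, iteratedFDerivWithin_univ] at h
  ext v
  simp only [Function.comp_def, hL] at h
  rw [h, ContinuousMultilinearMap.compContinuousLinearMap_apply]
  simp only [ContinuousLinearEquiv.coe_coe, hL, ContinuousMultilinearMap.map_smul_univ,
    Finset.prod_const, Finset.card_univ, Fintype.card_fin, smul_apply]

theorem iteratedFDeriv_const_smul_apply_of_ne_zero (f : E → F) {c : 𝕜} (hc : c ≠ 0) (m : ℕ)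
    (x : E) : iteratedFDeriv 𝕜 m (fun y => c • f y) x = c • iteratedFDeriv 𝕜 m f x := by
  let L : F ≃L[𝕜] F := ContinuousLinearEquiv.smulLeft (Units.mk0 c hc)
  have h := L.iteratedFDeriv_comp_left (f := f) (x := x) (i := m)
  ext v
  exact congrArg (· v) h

theorem pow_smul_iteratedFDeriv_smul_eq {f g : E → F} {c : 𝕜} (hc : c ≠ 0) {k : ℕ} {x : E}
    (h : (fun y => f (c • y)) =ᶠ[𝓝 x] fun y => c ^ k • g y) (m : ℕ) :
    c ^ m • iteratedFDeriv 𝕜 m f (c • x) = c ^ k • iteratedFDeriv 𝕜 m g x := by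
  rw [← iteratedFDeriv_comp_const_smul_of_ne_zero f hc, (h.iteratedFDeriv 𝕜 m).eq_of_nhds,
    iteratedFDeriv_const_smul_apply_of_ne_zero g (pow_ne_zero k hc)]

theorem isBigO_nhds_of_isBigO_nhdsNE {F' : Type*} [NormedAddCommGroup F'] {g : E → F}
    {g' : E → F'} {x : E} (h : g =O[𝓝[≠] x] g') (hx : g x = 0) : g =O[𝓝 x] g' := by
  simpa only [nhdsNE_sup_pure] using h.sup (isBigO_pure (g'' := g').2 fun _ => hx)

theorem eq_zero_of_isBigO_norm_pow {g : E → F} {p : ℕ} (hp : p ≠ 0)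
    (h : g =O[𝓝 0] fun x => ‖x‖ ^ p) : g 0 = 0 :=
  (by simpa using h : g =O[𝓝 0] fun x => ‖x - 0‖ ^ p).eq_zero_of_norm_pow hp

theorem continuousAt_zero_of_isBigO_norm_pow {g : E → F} {p : ℕ} (hp : p ≠ 0)
    (h : g =O[𝓝 0] fun x => ‖x‖ ^ p) : ContinuousAt g 0 := by
  rw [ContinuousAt, eq_zero_of_isBigO_norm_pow hp h]
  exact h.trans_tendsto ((continuous_norm.pow p).tendsto' 0 0 (by simp [hp]))

theorem hasFDerivAt_zero_of_isBigO_norm_pow {g : E → F} {p : ℕ} (hp : 1 < p)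
    (h : g =O[𝓝 0] fun x => ‖x‖ ^ p) : HasFDerivAt g (0 : E →L[𝕜] F) 0 := by
  have hg0 := eq_zero_of_isBigO_norm_pow (by omega) h
  rw [hasFDerivAt_iff_isLittleO_nhds_zero]
  simpa [hg0] using h.trans_isLittleO (isLittleO_norm_pow_id hp)

theorem contDiff_of_contDiffOn_compl_zero_of_isBigO {f : E → F} {j : ℕ}
    (hf : ContDiffOn 𝕜 j f {0}ᶜ) (h0 : f 0 = 0)
    (hO : ∀ m ≤ j, iteratedFDeriv 𝕜 m f =O[𝓝[≠] 0] fun x => ‖x‖ ^ (j + 1 - m)) :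
    ContDiff 𝕜 j f := by
  have hO₀ : ∀ m ≤ j, iteratedFDeriv 𝕜 m f =O[𝓝 0] fun x => ‖x‖ ^ (j + 1 - m) := by
    intro m hm
    induction m with
    | zero => exact isBigO_nhds_of_isBigO_nhdsNE (hO 0 hm) (by ext; simp [h0])
    | succ m ih =>
      have hder := hasFDerivAt_zero_of_isBigO_norm_pow (𝕜 := 𝕜) (by omega) (ih (by omega))
      refine isBigO_nhds_of_isBigO_nhdsNE (hO _ hm) ?_
      ext v
      rw [iteratedFDeriv_succ_apply_left, hder.fderiv]
      rfl
  have hf_at : ∀ x ≠ (0 : E), ContDiffAt 𝕜 j f x := fun x hx =>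
    hf.contDiffAt (isOpen_compl_singleton.mem_nhds hx)
  rw [contDiff_nat_iff_continuous_differentiable]
  refine ⟨fun m hm => continuous_iff_continuousAt.2 fun x => ?_, fun m hm x => ?_⟩
  · rcases eq_or_ne x 0 with rfl | hx
    · exact continuousAt_zero_of_isBigO_norm_pow (by omega) (hO₀ m hm)
    · exact (hf_at x hx).continuousAt_iteratedFDeriv (by exact_mod_cast hm)
  · rcases eq_or_ne x 0 with rfl | hx
    · exact (hasFDerivAt_zero_of_isBigO_norm_pow (by omega) (hO₀ m hm.le)).differentiableAt
    · exact (hf_at x hx).differentiableAt_iteratedFDeriv (by exact_mod_cast hm)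

end General

section Slice

variable {𝕜 : Type*} [NontriviallyNormedField 𝕜] {E₁ E₂ F : Type*}
  [NormedAddCommGroup E₁] [NormedSpace 𝕜 E₁] [NormedAddCommGroup E₂] [NormedSpace 𝕜 E₂]
  [NormedAddCommGroup F] [NormedSpace 𝕜 F]

theorem ContDiffOn.iteratedFDeriv_comp_prodMk_right {Φ : E₁ × E₂ → F} {W : Set (E₁ × E₂)}
    {N : WithTop ℕ∞} (hΦ : ContDiffOn 𝕜 N Φ W) (hW : IsOpen W) {m : ℕ} (hm : m ≤ N)
    {t : E₁} {y : E₂} (hty : (t, y) ∈ W) :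
    iteratedFDeriv 𝕜 m (fun z => Φ (t, z)) y =
      (iteratedFDeriv 𝕜 m Φ (t, y)).compContinuousLinearMap
        fun _ => ContinuousLinearMap.inr 𝕜 E₁ E₂ := by
  set c : E₁ × E₂ := (t, 0)
  set ι := ContinuousLinearMap.inr 𝕜 E₁ E₂
  have hslice : (fun z => Φ (t, z)) = (fun p => Φ (p + c)) ∘ ι := by
    funext z
    simp [c, ι]
  have hV : IsOpen ((· + c) ⁻¹' W) := hW.preimage (continuous_add_const c)
  have hV' : IsOpen (ι ⁻¹' ((· + c) ⁻¹' W)) := hV.preimage ι.continuous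
  have hyV : ι y + c = (t, y) := by simp [c, ι]
  have hΦc : ContDiffOn 𝕜 N (fun p => Φ (p + c)) ((· + c) ⁻¹' W) :=
    hΦ.comp (contDiff_id.add contDiff_const).contDiffOn (mapsTo_preimage _ _)
  have hyW : ι y + c ∈ W := hyV ▸ hty
  have h := ι.iteratedFDerivWithin_comp_right hΦc hV.uniqueDiffOn hV'.uniqueDiffOn hyW hm
  rw [iteratedFDerivWithin_of_isOpen m hV' hyW, iteratedFDerivWithin_of_isOpen m hV hyW,
    iteratedFDeriv_comp_add_right, hyV] at h
  rw [hslice, h]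

theorem IsCompact.exists_bound_iteratedFDeriv_comp_prodMk_right {Φ : E₁ × E₂ → F}
    {W : Set (E₁ × E₂)} {N : WithTop ℕ∞} (hΦ : ContDiffOn 𝕜 N Φ W) (hW : IsOpen W) {m : ℕ}
    (hm : m ≤ N) {K : Set (E₁ × E₂)} (hK : IsCompact K) (hKW : K ⊆ W) :
    ∃ C, ∀ p ∈ K, ‖iteratedFDeriv 𝕜 m (fun z => Φ (p.1, z)) p.2‖ ≤ C := by
  obtain ⟨C, hC⟩ := hK.exists_bound_of_continuousOn
    ((ContinuousOn.continuousOn_iteratedFDeriv hΦ hW hm).mono hKW)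
  refine ⟨C, fun p hp => ?_⟩
  rw [hΦ.iteratedFDeriv_comp_prodMk_right hW hm (hKW hp)]
  refine ((iteratedFDeriv 𝕜 m Φ p).norm_compContinuousLinearMap_le _).trans ?_
  refine (mul_le_of_le_one_right (norm_nonneg _) ?_).trans (hC p hp)
  exact Finset.prod_le_one (fun _ _ => norm_nonneg _)
    fun _ _ => ContinuousLinearMap.norm_inr_le_one 𝕜 E₁ E₂

end Slice

section Real

variable {E G : Type*} [NormedAddCommGroup E] [NormedSpace ℝ E]
  [NormedAddCommGroup G] [NormedSpace ℝ G]

theorem Convex.lipschitzOnWith_of_nnnorm_fderiv_le_of_ne {f : E → G} {C : NNReal} {s : Set E}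
    {x₀ : E} (hs : Convex ℝ s) (hf : ContinuousOn f s)
    (hd : ∀ x ∈ s, x ≠ x₀ → DifferentiableAt ℝ f x)
    (bound : ∀ x ∈ s, x ≠ x₀ → ‖fderiv ℝ f x‖₊ ≤ C) : LipschitzOnWith C f s := by
  have avoiding : ∀ x ∈ s, ∀ y ∈ s, x₀ ∉ segment ℝ x y → ‖f x - f y‖ ≤ C * ‖x - y‖ := by
    intro x hx y hy hx₀
    have hsub := hs.segment_subset hx hy
    exact (convex_segment x y).norm_image_sub_le_of_norm_fderiv_le
      (fun z hz => hd z (hsub hz) (ne_of_mem_of_not_mem hz hx₀))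
      (fun z hz => bound z (hsub hz) (ne_of_mem_of_not_mem hz hx₀))
      (right_mem_segment ℝ x y) (left_mem_segment ℝ x y)
  -- approach `x₀` along the open segment from `x`, whose subsegments towards `x` avoid `x₀`
  have to_x₀ : x₀ ∈ s → ∀ x ∈ s, ‖f x - f x₀‖ ≤ C * ‖x - x₀‖ := by
    intro h₀ x hx
    rcases eq_or_ne x₀ x with rfl | hne
    · simp
    have hopen : openSegment ℝ x₀ x ⊆ s :=
      (openSegment_subset_segment ℝ x₀ x).trans (hs.segment_subset h₀ hx)
    have hcl : x₀ ∈ closure (openSegment ℝ x₀ x) := by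
      rw [closure_openSegment]
      exact left_mem_segment ℝ x₀ x
    have hcont : ContinuousWithinAt f (openSegment ℝ x₀ x) x₀ := (hf x₀ h₀).mono hopen
    refine ContinuousWithinAt.closure_le (f := fun z => ‖f x - f z‖)
      (g := fun z => C * ‖x - z‖) hcl (continuousWithinAt_const.sub hcont).norm
      (continuous_const.mul (continuous_const.sub continuous_id).norm).continuousWithinAt ?_
    intro z hz
    refine avoiding x hx z (hopen hz) fun hx₀ => ?_
    have hz₀ : z ≠ x₀ := fun h => hne (left_mem_openSegment_iff.1 (h ▸ hz))
    have h₁ : Wbtw ℝ x₀ z x := mem_segment_iff_wbtw.1 (openSegment_subset_segment ℝ x₀ x hz)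
    have h₂ : Wbtw ℝ z x₀ x := mem_segment_iff_wbtw.1 (segment_symm ℝ x z ▸ hx₀)
    exact hz₀ (h₁.swap_left_iff.1 h₂).symm
  rw [lipschitzOnWith_iff_norm_sub_le]
  intro x hx y hy
  by_cases h : x₀ ∈ segment ℝ x y
  · have h₀ := hs.segment_subset hx hy h
    calc ‖f x - f y‖ ≤ ‖f x - f x₀‖ + ‖f x₀ - f y‖ := norm_sub_le_norm_sub_add_norm_sub ..
      _ ≤ C * ‖x - x₀‖ + C * ‖x₀ - y‖ := by
        rw [norm_sub_rev (f x₀), norm_sub_rev x₀]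
        exact add_le_add (to_x₀ h₀ x hx) (to_x₀ h₀ y hy)
      _ = C * ‖x - y‖ := by
        simp only [← dist_eq_norm, ← mul_add, dist_add_dist_of_mem_segment h]
  · exact avoiding x hx y hy h

theorem exists_lipschitzOnWith_iteratedFDeriv_of_bound {f : E → G} {j : ℕ} {s : Set E}
    (hf : ContDiff ℝ j f) (hf' : ContDiffOn ℝ (j + 1 : ℕ) f {0}ᶜ) (hs : Convex ℝ s)
    (hbound : ∃ C, ∀ x ∈ s, x ≠ 0 → ‖iteratedFDeriv ℝ (j + 1) f x‖ ≤ C) :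
    ∃ L, LipschitzOnWith L (iteratedFDeriv ℝ j f) s := by
  obtain ⟨C, hC⟩ := hbound
  refine ⟨C.toNNReal, hs.lipschitzOnWith_of_nnnorm_fderiv_le_of_ne (x₀ := 0)
    (hf.continuous_iteratedFDeriv le_rfl).continuousOn (fun x _ hx => ?_) fun x hx hx0 => ?_⟩
  · exact (hf'.contDiffAt (isOpen_compl_singleton.mem_nhds hx)).differentiableAt_iteratedFDeriv
      (by exact_mod_cast Nat.lt_succ_self j)
  · rw [← NNReal.coe_le_coe, coe_nnnorm, norm_fderiv_iteratedFDeriv]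
    exact (hC x hx hx0).trans (Real.le_coe_toNNReal C)

theorem norm_iteratedFDeriv_smul_eq {f g : E → G} {t : ℝ} (ht : 0 < t) {k m : ℕ} (hm : m ≤ k)
    {x : E} (h : (fun y => f (t • y)) =ᶠ[𝓝 x] fun y => t ^ k • g y) :
    ‖iteratedFDeriv ℝ m f (t • x)‖ = t ^ (k - m) * ‖iteratedFDeriv ℝ m g x‖ := by
  have h' := congrArg norm (pow_smul_iteratedFDeriv_smul_eq ht.ne' h m)
  simp only [norm_smul, norm_pow, Real.norm_of_nonneg ht.le] at h'
  rw [← pow_sub_mul_pow t hm] at h'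
  exact mul_left_cancel₀ (pow_ne_zero m ht.ne') (by rw [h']; ring)

end Real

section Radial

variable {E : Type*} [NormedAddCommGroup E] [InnerProductSpace ℝ E]

-- Chosen so that `b (t • y) = t ^ k * rescaledProfile k a (t, y)` for `t > 0`, while staying
-- smooth across `t = 0` as long as `y ≠ 0`.
noncomputable def rescaledProfile (k : ℕ) (a : ℝ × E → ℝ) (p : ℝ × E) : ℝ :=
  ‖p.2‖ ^ k * a (p.1 * ‖p.2‖, ‖p.2‖⁻¹ • p.2)

variable {k : ℕ} {a : ℝ × E → ℝ} {b : E → ℝ}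

theorem contDiffOn_rescaledProfile (ha : ContDiff ℝ (⊤ : ℕ∞) a) :
    ContDiffOn ℝ (⊤ : ℕ∞) (rescaledProfile k a) {p | p.2 ≠ 0} := by
  intro p hp
  have hnorm : ContDiffAt ℝ (⊤ : ℕ∞) (fun q : ℝ × E => ‖q.2‖) p :=
    (contDiffAt_norm ℝ hp).comp p contDiffAt_snd
  have hdir : ContDiffAt ℝ (⊤ : ℕ∞) (fun q : ℝ × E => ‖q.2‖⁻¹ • q.2) p :=
    (hnorm.inv (norm_ne_zero_iff.2 hp)).smul contDiffAt_snd
  exact ((hnorm.pow k).mul (ha.contDiffAt.comp p ((contDiffAt_fst.mul hnorm).prodMk hdir)))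
    |>.contDiffWithinAt

theorem contDiffOn_compl_zero_of_eq_norm_pow_mul (ha : ContDiff ℝ (⊤ : ℕ∞) a)
    (hb : ∀ x, x ≠ 0 → b x = ‖x‖ ^ k * a (‖x‖, ‖x‖⁻¹ • x)) :
    ContDiffOn ℝ (⊤ : ℕ∞) b {0}ᶜ := by
  intro x hx
  have hslice : ContDiffAt ℝ (⊤ : ℕ∞) (fun y => rescaledProfile k a (1, y)) x :=
    ((contDiffOn_rescaledProfile ha).contDiffAt
      ((isOpen_ne.preimage continuous_snd).mem_nhds hx)).comp x
      (contDiffAt_const.prodMk contDiffAt_id)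
  refine (hslice.congr_of_eventuallyEq ?_).contDiffWithinAt
  filter_upwards [eventually_ne_nhds hx] with y hy
  simp [hb y hy, rescaledProfile]

theorem apply_smul_eq_pow_mul_rescaledProfile
    (hb : ∀ x, x ≠ 0 → b x = ‖x‖ ^ k * a (‖x‖, ‖x‖⁻¹ • x)) {t : ℝ} (ht : 0 < t) {y : E}
    (hy : y ≠ 0) :
    b (t • y) = t ^ k * rescaledProfile k a (t, y) := by
  have hnorm : ‖t • y‖ = t * ‖y‖ := by rw [norm_smul, Real.norm_of_nonneg ht.le]
  have hdir : ‖t • y‖⁻¹ • t • y = ‖y‖⁻¹ • y := by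
    rw [hnorm, smul_smul]
    congr 1
    field_simp
  rw [hb _ (smul_ne_zero ht.ne' hy), hdir, hnorm, rescaledProfile, mul_pow, mul_assoc]

theorem norm_iteratedFDeriv_eq_pow_mul_rescaledProfile
    (hb : ∀ x, x ≠ 0 → b x = ‖x‖ ^ k * a (‖x‖, ‖x‖⁻¹ • x)) {m : ℕ} (hm : m ≤ k) {x : E}
    (hx : x ≠ 0) :
    ‖iteratedFDeriv ℝ m b x‖ =
      ‖x‖ ^ (k - m) * ‖iteratedFDeriv ℝ m (fun y => rescaledProfile k a (‖x‖, y)) (‖x‖⁻¹ • x)‖ := by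
  have ht : 0 < ‖x‖ := norm_pos_iff.2 hx
  have hω : ‖x‖⁻¹ • x ≠ 0 := smul_ne_zero (inv_ne_zero ht.ne') hx
  conv_lhs => rw [← smul_inv_smul₀ ht.ne' x]
  exact norm_iteratedFDeriv_smul_eq ht hm
    ((eventually_ne_nhds hω).mono fun y hy => apply_smul_eq_pow_mul_rescaledProfile hb ht hy)

theorem exists_norm_iteratedFDeriv_le_of_norm_le [FiniteDimensional ℝ E]
    (ha : ContDiff ℝ (⊤ : ℕ∞) a) (hb : ∀ x, x ≠ 0 → b x = ‖x‖ ^ k * a (‖x‖, ‖x‖⁻¹ • x))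
    {m : ℕ} (hm : m ≤ k) (Λ : ℝ) :
    ∃ C, ∀ x, x ≠ 0 → ‖x‖ ≤ Λ → ‖iteratedFDeriv ℝ m b x‖ ≤ C * ‖x‖ ^ (k - m) := by
  have hK : IsCompact (Icc 0 Λ ×ˢ sphere (0 : E) 1) := isCompact_Icc.prod (isCompact_sphere 0 1)
  obtain ⟨C, hC⟩ := hK.exists_bound_iteratedFDeriv_comp_prodMk_right
    (contDiffOn_rescaledProfile ha) (isOpen_ne.preimage continuous_snd) (m := m)
    (by exact_mod_cast le_top) fun p hp => ne_of_mem_sphere hp.2 one_ne_zero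
  refine ⟨C, fun x hx hxΛ => ?_⟩
  rw [norm_iteratedFDeriv_eq_pow_mul_rescaledProfile hb hm hx, mul_comm]
  have hmem : (‖x‖, ‖x‖⁻¹ • x) ∈ Icc 0 Λ ×ˢ sphere (0 : E) 1 :=
    ⟨⟨norm_nonneg x, hxΛ⟩, mem_sphere_zero_iff_norm.2 (norm_smul_inv_norm hx)⟩
  exact mul_le_mul_of_nonneg_right (hC (‖x‖, ‖x‖⁻¹ • x) hmem) (by positivity)

theorem isBigO_iteratedFDeriv_nhdsNE [FiniteDimensional ℝ E] (ha : ContDiff ℝ (⊤ : ℕ∞) a)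
    (hb : ∀ x, x ≠ 0 → b x = ‖x‖ ^ k * a (‖x‖, ‖x‖⁻¹ • x)) {m : ℕ} (hm : m ≤ k) :
    iteratedFDeriv ℝ m b =O[𝓝[≠] 0] fun x => ‖x‖ ^ (k - m) := by
  obtain ⟨C, hC⟩ := exists_norm_iteratedFDeriv_le_of_norm_le ha hb hm 1
  refine IsBigO.of_bound C ?_
  filter_upwards [self_mem_nhdsWithin,
    nhdsWithin_le_nhds (closedBall_mem_nhds (0 : E) one_pos)] with x hx hx1
  rw [norm_pow, norm_norm]
  exact hC x hx (mem_closedBall_zero_iff.1 hx1)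

theorem exists_norm_iteratedFDeriv_le_of_forall_eq [FiniteDimensional ℝ E]
    (ha : ContDiff ℝ (⊤ : ℕ∞) a) (hb : ∀ x, x ≠ 0 → b x = ‖x‖ ^ k * a (‖x‖, ‖x‖⁻¹ • x))
    (hb0 : b 0 = 0) (hind : ∀ t₁ t₂ y, a (t₁, y) = a (t₂, y)) {m : ℕ} (hm : m ≤ k) :
    ∃ C, ∀ x, x ≠ 0 → ‖iteratedFDeriv ℝ m b x‖ ≤ C * ‖x‖ ^ (k - m) := by
  have hhom : ∀ t : ℝ, 0 < t → ∀ y, b (t • y) = t ^ k • b y := by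
    intro t ht y
    rcases eq_or_ne y 0 with rfl | hy
    · simp [hb0]
    rw [apply_smul_eq_pow_mul_rescaledProfile hb ht hy, hb y hy, rescaledProfile,
      hind (t * ‖y‖) ‖y‖, smul_eq_mul]
  obtain ⟨C, hC⟩ := exists_norm_iteratedFDeriv_le_of_norm_le ha hb hm 1
  refine ⟨C, fun x hx => ?_⟩
  have ht : 0 < ‖x‖ := norm_pos_iff.2 hx
  have hω : ‖‖x‖⁻¹ • x‖ = 1 := norm_smul_inv_norm hx
  have hω0 : ‖x‖⁻¹ • x ≠ 0 := smul_ne_zero (inv_ne_zero ht.ne') hx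
  conv_lhs => rw [← smul_inv_smul₀ ht.ne' x]
  rw [norm_iteratedFDeriv_smul_eq ht hm (Eventually.of_forall (hhom _ ht)), mul_comm]
  refine mul_le_mul_of_nonneg_right ?_ (by positivity)
  simpa [hω] using hC _ hω0 hω.le

end Radial

theorem stmt7_general (n k : ℕ) (hk : 1 ≤ k)
    (a : ℝ × EuclideanSpace ℝ (Fin n) → ℝ) (ha : ContDiff ℝ (⊤ : ℕ∞) a)
    (b : EuclideanSpace ℝ (Fin n) → ℝ)
    (hb : ∀ x : EuclideanSpace ℝ (Fin n), x ≠ 0 → b x = ‖x‖ ^ k * a (‖x‖, ‖x‖⁻¹ • x))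
    (hb0 : b 0 = 0) :
    (ContDiff ℝ (k - 1 : ℕ) b ∧
      ∀ K : Set (EuclideanSpace ℝ (Fin n)), IsCompact K →
        ∃ L : NNReal, LipschitzOnWith L (iteratedFDeriv ℝ (k - 1) b) K) ∧
    ((∀ (t₁ t₂ : ℝ) (y : EuclideanSpace ℝ (Fin n)), a (t₁, y) = a (t₂, y)) →
      ∃ L : NNReal, LipschitzWith L (iteratedFDeriv ℝ (k - 1) b)) := by
  obtain ⟨j, rfl⟩ : ∃ j, k = j + 1 := ⟨k - 1, by omega⟩
  rw [Nat.add_sub_cancel]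
  have hsmooth := contDiffOn_compl_zero_of_eq_norm_pow_mul ha hb
  have hcd : ContDiff ℝ j b :=
    contDiff_of_contDiffOn_compl_zero_of_isBigO (hsmooth.of_le (by exact_mod_cast le_top)) hb0
      fun m hm => isBigO_iteratedFDeriv_nhdsNE ha hb (by omega)
  have hlip := fun (s : Set (EuclideanSpace ℝ (Fin n))) =>
    exists_lipschitzOnWith_iteratedFDeriv_of_bound (s := s) hcd
      (hsmooth.of_le (by exact_mod_cast le_top))
  refine ⟨⟨hcd, fun K hK => ?_⟩, fun hind => ?_⟩
  · obtain ⟨R, hR⟩ := hK.isBounded.subset_closedBall 0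
    obtain ⟨C, hC⟩ := exists_norm_iteratedFDeriv_le_of_norm_le ha hb le_rfl R
    obtain ⟨L, hL⟩ := hlip _ (convex_closedBall 0 R)
      ⟨C, fun x hx hx0 => by simpa using hC x hx0 (mem_closedBall_zero_iff.1 hx)⟩
    exact ⟨L, hL.mono hR⟩
  · obtain ⟨C, hC⟩ := exists_norm_iteratedFDeriv_le_of_forall_eq ha hb hb0 hind le_rfl
    obtain ⟨L, hL⟩ := hlip _ convex_univ ⟨C, fun x _ hx0 => by simpa using hC x hx0⟩
    exact ⟨L, lipschitzOnWith_univ.1 hL⟩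

/-- Let `a ∈ C^∞(ℝ × ℝⁿ)` and `b(x) = |x|^k a(|x|, x/|x|)` with `b(0) = 0` (`k ≥ 1`).
Then `b ∈ C^{k-1,1}_loc(ℝⁿ)`; if `a` does not depend on its first variable, then
`b ∈ C^{k-1,1}(ℝⁿ)` (its `(k-1)`-th derivative is globally Lipschitz). -/
theorem stmt7 (n k : ℕ) (hn : 1 ≤ n) (hk : 1 ≤ k)
    (a : ℝ × EuclideanSpace ℝ (Fin n) → ℝ) (ha : ContDiff ℝ (⊤ : ℕ∞) a)
    (b : EuclideanSpace ℝ (Fin n) → ℝ)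
    (hb : ∀ x : EuclideanSpace ℝ (Fin n), x ≠ 0 → b x = ‖x‖ ^ k * a (‖x‖, ‖x‖⁻¹ • x))
    (hb0 : b 0 = 0) :
    (ContDiff ℝ (k - 1 : ℕ) b ∧
      ∀ K : Set (EuclideanSpace ℝ (Fin n)), IsCompact K →
        ∃ L : NNReal, LipschitzOnWith L (iteratedFDeriv ℝ (k - 1) b) K) ∧
    ((∀ (t₁ t₂ : ℝ) (y : EuclideanSpace ℝ (Fin n)), a (t₁, y) = a (t₂, y)) →
      ∃ L : NNReal, LipschitzWith L (iteratedFDeriv ℝ (k - 1) b)) :=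
  stmt7_general n k hk a ha b hb hb0
end

section
/- Let Y be a set, let f : Y → ℝ and F ≥ 0 with |f(z)| ≤ F for all z ∈ Y, and let δ > 0 satisfy δ·F < 1/2. Let ψ : ℝ → Y → Y be a one-parameter group of bijections (ψ₀ = id and ψ_{s+t} = ψ_s ∘ ψ_t for all s,t ∈ ℝ) such that for every z ∈ Y the map s ↦ f(ψ_s(z)) is monotone nondecreasing on ℝ. Then the map α : [0,δ] × Y → ℝ × Y defined by α(s,z) := ( s − (s²/2)·f(z) , ψ_s(z) ) is injective. -/
noncomputable section

open Set

/-- If `|f| ≤ F` on `Y`, `δ F < 1/2`, and `ψ` is a one-parameter group of bijections of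
`Y` along which `f` is nondecreasing, then `α(s,z) = (s - s²/2 f(z), ψ_s(z))` is
injective on `[0,δ] × Y`. -/
theorem stmt9 {Y : Type*} (f : Y → ℝ) (F : ℝ) (hF : 0 ≤ F) (hfF : ∀ z : Y, |f z| ≤ F)
    (δ : ℝ) (hδ : 0 < δ) (hδF : δ * F < 1 / 2)
    (ψ : ℝ → Y → Y) (hbij : ∀ s : ℝ, Function.Bijective (ψ s))
    (hψ0 : ψ 0 = id) (hψadd : ∀ s t : ℝ, ψ (s + t) = ψ s ∘ ψ t)
    (hmono : ∀ z : Y, Monotone fun s : ℝ => f (ψ s z)) :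
    Set.InjOn (fun p : ℝ × Y => (p.1 - p.1 ^ 2 / 2 * f p.2, ψ p.1 p.2))
      (Set.Icc 0 δ ×ˢ Set.univ) := by
  have key : ∀ s t : ℝ, s ∈ Icc (0:ℝ) δ → t ∈ Icc (0:ℝ) δ → s ≤ t →
      ∀ z w : Y, s - s ^ 2 / 2 * f z = t - t ^ 2 / 2 * f w → ψ s z = ψ t w → s = t := by
    intro s t hs ht hst z w heq hpsi
    by_contra hne
    have hlt : s < t := lt_of_le_of_ne hst hne
    have hw : w = ψ (s - t) z := by
      have h2 : ψ (-t) (ψ t w) = w := by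
        have h := hψadd (-t) t
        have : ψ (-t + t) w = ψ (-t) (ψ t w) := by rw [h]; rfl
        simpa [hψ0] using this.symm
      have h1 : ψ (-t) (ψ s z) = ψ (s - t) z := by
        have h := hψadd (-t) s
        have : ψ (-t + s) z = ψ (-t) (ψ s z) := by rw [h]; rfl
        rw [← this]; ring_nf
      calc w = ψ (-t) (ψ t w) := h2.symm
        _ = ψ (-t) (ψ s z) := by rw [hpsi]
        _ = ψ (s - t) z := h1
    have hfw : f w ≤ f z := by
      rw [hw]
      have h := hmono z (show s - t ≤ (0:ℝ) by linarith)
      simpa [hψ0] using h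
    have hfz := abs_le.mp (hfF z)
    have hts : 0 ≤ t ^ 2 - s ^ 2 := by nlinarith [hs.1]
    have habs : t ^ 2 * f w - s ^ 2 * f z ≤ (t ^ 2 - s ^ 2) * F := by
      nlinarith [sq_nonneg t, hfz.2]
    have hsum : (t - s) * (t + s) * F ≤ (t - s) * (2 * δ) * F := by
      have h1 : t + s ≤ 2 * δ := by linarith [hs.2, ht.2]
      have h2 : 0 ≤ t - s := by linarith
      nlinarith
    nlinarith [mul_pos (sub_pos.mpr hlt) (show (0:ℝ) < 1/2 - δ * F by linarith)]
  intro p hp q hq heq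
  obtain ⟨s, z⟩ := p; obtain ⟨t, w⟩ := q
  simp only [Prod.mk.injEq] at heq
  obtain ⟨h1, h2⟩ := heq
  have hs : s ∈ Icc (0:ℝ) δ := hp.1
  have ht : t ∈ Icc (0:ℝ) δ := hq.1
  have hst : s = t := by
    rcases le_total s t with h | h
    · exact key s t hs ht h z w h1 h2
    · exact (key t s ht hs h w z h1.symm h2.symm).symm
  subst hst
  have hzw : z = w := (hbij s).1 (by simpa using h2)
  simp [hzw]
end
end

section
/- There exists a constant C > 0 such that for every δ > 0, every ε > 0 and every t ∈ [0, δ/2], one has 0 ≤ 1 − ∫_{B_δ} U_{ε,te₁}(y)⁴ dy ≤ C·ε⁴/δ⁴. -/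
/-!
Substituting `y = ε x + t e₁` turns `∫_{B_δ} U_{ε,te₁}⁴` into the integral of `U⁴` over a set
containing the ball of radius `R = δ/(2ε)`, because `|t e₁| ≤ δ/2`. Since `∫ U⁴ = 1`, the defect
`1 - ∫_{B_δ} U_{ε,te₁}⁴` is the integral of `U⁴` over the complement of that set: it is
nonnegative and at most the tail `∫_{|x| ≥ R} U⁴`. In polar coordinates, with the antiderivative
`(1+r²)⁻³/6 - (1+r²)⁻²/4` of `r³ (1+r²)⁻⁴`, this tail is at most `3/R⁴ = 48 ε⁴/δ⁴`.
-/

noncomputable section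

open MeasureTheory Real RealInnerProductSpace

open Set Metric Filter Module Topology

section AffineChangeOfVariables

variable {E F : Type*} [NormedAddCommGroup E] [NormedSpace ℝ E] [MeasurableSpace E] [BorelSpace E]
  [FiniteDimensional ℝ E] (μ : Measure E) [μ.IsAddHaarMeasure] [NormedAddCommGroup F]
  [NormedSpace ℝ F]

theorem integral_comp_smul_add_of_pos (g : E → F) {R : ℝ} (hR : 0 < R) (a : E) :
    ∫ x, g (R • x + a) ∂μ = (R ^ finrank ℝ E)⁻¹ • ∫ y, g y ∂μ := by
  rw [Measure.integral_comp_smul_of_nonneg μ (fun x => g (x + a)) R (hR := hR.le),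
    integral_add_right_eq_self]

theorem setIntegral_preimage_smul_add_of_pos (g : E → F) {R : ℝ} (hR : 0 < R) (a : E) {s : Set E}
    (hs : MeasurableSet s) :
    ∫ x in (fun x => R • x + a) ⁻¹' s, g (R • x + a) ∂μ =
      (R ^ finrank ℝ E)⁻¹ • ∫ y in s, g y ∂μ := by
  have hmeas : Measurable fun x : E => R • x + a := by fun_prop
  rw [← integral_indicator (hmeas hs), ← integral_indicator hs,
    ← integral_comp_smul_add_of_pos μ _ hR a]
  exact integral_congr_ae (ae_of_all _ fun x => indicator_comp_right (fun x => R • x + a))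

end AffineChangeOfVariables

theorem ball_subset_preimage_smul_add {E : Type*} [SeminormedAddCommGroup E] [NormedSpace ℝ E]
    {ε r δ : ℝ} {a : E} (hε : 0 < ε) (h : ε * r + ‖a‖ ≤ δ) :
    ball (0 : E) r ⊆ (fun x => ε • x + a) ⁻¹' ball 0 δ := by
  intro x hx
  rw [mem_ball_zero_iff] at hx
  rw [mem_preimage, mem_ball_zero_iff]
  calc ‖ε • x + a‖ ≤ ε * ‖x‖ + ‖a‖ := by
        simpa [norm_smul, abs_of_pos hε] using norm_add_le (ε • x) a
    _ < ε * r + ‖a‖ := by gcongr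
    _ ≤ δ := h

theorem volume_real_ball_zero_one_E4 : volume.real (ball (0 : E4) 1) = π ^ 2 / 2 := by
  have hsqrt : √π ^ 4 = π ^ 2 := by
    rw [show 4 = 2 * 2 from rfl, pow_mul, sq_sqrt pi_pos.le]
  have hGamma : Gamma ((4 : ℝ) / 2 + 1) = 2 := by
    rw [show (4 : ℝ) / 2 + 1 = (2 : ℕ) + 1 by norm_num, Gamma_nat_eq_factorial]
    norm_num
  rw [measureReal_def, EuclideanSpace.volume_ball, Fintype.card_fin, ENNReal.ofReal_one, one_pow,
    one_mul, Nat.cast_ofNat, hsqrt, hGamma, ENNReal.toReal_ofReal (by positivity)]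

theorem integral_fun_norm_E4 (f : ℝ → ℝ) :
    ∫ x : E4, f ‖x‖ = 2 * π ^ 2 * ∫ r in Ioi (0 : ℝ), r ^ 3 * f r := by
  rw [integral_fun_norm_addHaar, finrank_euclideanSpace_fin, volume_real_ball_zero_one_E4,
    nsmul_eq_mul, smul_eq_mul]
  simp only [smul_eq_mul]
  ring

theorem setIntegral_compl_ball_fun_norm_E4 (f : ℝ → ℝ) {R : ℝ} (hR : 0 < R) :
    ∫ x in (ball (0 : E4) R)ᶜ, f ‖x‖ = 2 * π ^ 2 * ∫ r in Ioi R, r ^ 3 * f r := by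
  have hcompl : (ball (0 : E4) R)ᶜ = norm ⁻¹' Ici R := by
    ext x; simp
  rw [hcompl, ← integral_indicator (measurableSet_Ici.preimage measurable_norm)]
  simp_rw [← Function.comp_apply (f := f) (g := norm), indicator_comp_right, integral_fun_norm_E4,
    ← indicator_mul_right _ (fun r : ℝ => r ^ 3), setIntegral_indicator measurableSet_Ici,
    inter_eq_self_of_subset_right (Ici_subset_Ioi.2 hR), integral_Ici_eq_integral_Ioi]

theorem hasDerivAt_inv_one_add_sq_pow (n : ℕ) (r : ℝ) :
    HasDerivAt (fun r : ℝ => ((1 + r ^ 2) ^ n)⁻¹) (-(2 * n * r) * ((1 + r ^ 2) ^ (n + 1))⁻¹) r := by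
  have hpos : 0 < 1 + r ^ 2 := by positivity
  have hbase : HasDerivAt (fun r : ℝ => 1 + r ^ 2) (2 * r) r := by
    simpa using (hasDerivAt_pow 2 r).const_add 1
  refine ((hbase.pow n).inv (pow_ne_zero n hpos.ne')).congr_deriv ?_
  rcases n with _ | n
  · simp
  · simp only [Pi.pow_apply, Nat.cast_add, Nat.cast_one, add_tsub_cancel_right]
    field_simp
    ring

theorem integral_Ioi_pow_three_mul_inv_one_add_sq_pow_four {R : ℝ} (hR : 0 ≤ R) :
    ∫ r in Ioi R, r ^ 3 * ((1 + r ^ 2) ^ 4)⁻¹ =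
      ((1 + R ^ 2) ^ 2)⁻¹ / 4 - ((1 + R ^ 2) ^ 3)⁻¹ / 6 := by
  set G : ℝ → ℝ := fun r => ((1 + r ^ 2) ^ 3)⁻¹ / 6 - ((1 + r ^ 2) ^ 2)⁻¹ / 4
  have hG : ∀ r ∈ Ici R, HasDerivAt G (r ^ 3 * ((1 + r ^ 2) ^ 4)⁻¹) r := fun r _ => by
    refine (((hasDerivAt_inv_one_add_sq_pow 3 r).div_const 6).sub
      ((hasDerivAt_inv_one_add_sq_pow 2 r).div_const 4)).congr_deriv ?_
    push_cast
    field_simp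
    ring
  have hnonneg : ∀ r ∈ Ioi R, 0 ≤ r ^ 3 * ((1 + r ^ 2) ^ 4)⁻¹ := fun r hr => by
    have : 0 < r := hR.trans_lt hr
    positivity
  have hG_tendsto : Tendsto G atTop (𝓝 0) := by
    have hbase : Tendsto (fun r : ℝ => 1 + r ^ 2) atTop atTop :=
      tendsto_atTop_add_const_left _ 1 (tendsto_pow_atTop two_ne_zero)
    have h3 := ((tendsto_pow_atTop three_ne_zero).comp hbase).inv_tendsto_atTop
    have h2 := ((tendsto_pow_atTop two_ne_zero).comp hbase).inv_tendsto_atTop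
    simpa using (h3.div_const 6).sub (h2.div_const 4)
  rw [integral_Ioi_of_hasDerivAt_of_nonneg' hG hnonneg hG_tendsto]
  ring

theorem c4_pow_four : c4 ^ 4 = 6 / π ^ 2 := by
  rw [c4, ← rpow_natCast, ← rpow_mul (by positivity)]
  norm_num

theorem Ubub_pow_four (x : E4) : Ubub x ^ 4 = c4 ^ 4 * ((1 + ‖x‖ ^ 2) ^ 4)⁻¹ := by
  rw [Ubub, mul_pow, inv_pow]

theorem integrable_Ubub_pow_four : Integrable fun x : E4 => Ubub x ^ 4 := by
  have h := (integrable_rpow_neg_one_add_norm_sq (E := E4) (μ := volume) (r := 8)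
    (by simp; norm_num)).const_mul (c4 ^ 4)
  refine h.congr (ae_of_all _ fun x => ?_)
  dsimp only
  rw [Ubub_pow_four, show -(8 : ℝ) / 2 = -(4 : ℕ) by norm_num, rpow_neg (by positivity),
    rpow_natCast]

theorem integral_Ubub_pow_four : ∫ x : E4, Ubub x ^ 4 = 1 := by
  simp_rw [Ubub_pow_four, integral_fun_norm_E4 fun r => c4 ^ 4 * ((1 + r ^ 2) ^ 4)⁻¹,
    mul_left_comm _ (c4 ^ 4), integral_const_mul,
    integral_Ioi_pow_three_mul_inv_one_add_sq_pow_four le_rfl, c4_pow_four]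
  field_simp
  norm_num

theorem setIntegral_compl_ball_Ubub_pow_four_le {R : ℝ} (hR : 0 < R) :
    ∫ x in (ball (0 : E4) R)ᶜ, Ubub x ^ 4 ≤ 3 / R ^ 4 := by
  simp_rw [Ubub_pow_four, setIntegral_compl_ball_fun_norm_E4 (fun r => c4 ^ 4 * ((1 + r ^ 2) ^ 4)⁻¹) hR,
    mul_left_comm _ (c4 ^ 4), integral_const_mul,
    integral_Ioi_pow_three_mul_inv_one_add_sq_pow_four hR.le, c4_pow_four]
  have hR4 : R ^ 4 ≤ (1 + R ^ 2) ^ 2 := by nlinarith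
  have : ((1 + R ^ 2) ^ 2)⁻¹ ≤ (R ^ 4)⁻¹ := inv_anti₀ (by positivity) hR4
  have : 0 ≤ ((1 + R ^ 2) ^ 3)⁻¹ := by positivity
  calc 2 * π ^ 2 * (6 / π ^ 2 * (((1 + R ^ 2) ^ 2)⁻¹ / 4 - ((1 + R ^ 2) ^ 3)⁻¹ / 6))
      = 3 * ((1 + R ^ 2) ^ 2)⁻¹ - 2 * ((1 + R ^ 2) ^ 3)⁻¹ := by field_simp; ring
    _ ≤ 3 / R ^ 4 := by rw [div_eq_mul_inv]; linarith

theorem Ueps_smul_add {ε : ℝ} (hε : ε ≠ 0) (x₀ x : E4) : Ueps ε x₀ (ε • x + x₀) = ε⁻¹ * Ubub x := by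
  rw [Ueps, add_sub_cancel_right, smul_smul, inv_mul_cancel₀ hε, one_smul]

theorem setIntegral_Ueps_pow_four {ε : ℝ} (hε : 0 < ε) (x₀ : E4) {s : Set E4}
    (hs : MeasurableSet s) :
    ∫ y in s, Ueps ε x₀ y ^ 4 = ∫ x in (fun x => ε • x + x₀) ⁻¹' s, Ubub x ^ 4 := by
  have h := setIntegral_preimage_smul_add_of_pos volume (fun y => Ueps ε x₀ y ^ 4) hε x₀ hs
  simp_rw [Ueps_smul_add hε.ne', mul_pow, integral_const_mul, finrank_euclideanSpace_fin,
    smul_eq_mul, inv_pow] at h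
  rw [← mul_right_inj' (inv_ne_zero (pow_ne_zero 4 hε.ne')), h]

theorem norm_e1 : ‖e1‖ = 1 := by
  rw [e1, EuclideanSpace.single, PiLp.norm_single, norm_one]

/-- There is `C > 0` such that for every `δ > 0`, `ε > 0` and `t ∈ [0, δ/2]`,
`0 ≤ 1 - ∫_{B_δ} U_{ε,te₁}⁴ ≤ C ε⁴/δ⁴`. -/
theorem stmt11 :
    ∃ C : ℝ, 0 < C ∧ ∀ δ : ℝ, 0 < δ → ∀ ε : ℝ, 0 < ε → ∀ t ∈ Set.Icc (0 : ℝ) (δ / 2),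
      0 ≤ 1 - (∫ y in Metric.ball (0 : E4) δ, Ueps ε (t • e1) y ^ 4) ∧
      1 - (∫ y in Metric.ball (0 : E4) δ, Ueps ε (t • e1) y ^ 4) ≤ C * ε ^ 4 / δ ^ 4 := by
  refine ⟨48, by norm_num, fun δ hδ ε hε t ⟨ht0, htδ⟩ => ?_⟩
  set s := (fun x : E4 => ε • x + t • e1) ⁻¹' ball 0 δ
  have hs : MeasurableSet s := measurableSet_ball.preimage (by fun_prop)
  have hdefect : 1 - ∫ y in ball 0 δ, Ueps ε (t • e1) y ^ 4 = ∫ x in sᶜ, Ubub x ^ 4 := by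
    rw [setIntegral_Ueps_pow_four hε _ measurableSet_ball, ← integral_Ubub_pow_four,
      ← integral_add_compl hs integrable_Ubub_pow_four, add_sub_cancel_left]
  have hball : ball 0 (δ / (2 * ε)) ⊆ s := by
    refine ball_subset_preimage_smul_add hε ?_
    rw [norm_smul, norm_e1, mul_one, Real.norm_of_nonneg ht0]
    field_simp
    linarith
  rw [hdefect]
  refine ⟨setIntegral_nonneg hs.compl fun x _ => by positivity, ?_⟩
  calc ∫ x in sᶜ, Ubub x ^ 4 ≤ ∫ x in (ball 0 (δ / (2 * ε)))ᶜ, Ubub x ^ 4 :=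
        setIntegral_mono_set integrable_Ubub_pow_four.integrableOn
          (ae_of_all _ fun x => by positivity) (compl_subset_compl.2 hball).eventuallyLE
    _ ≤ 3 / (δ / (2 * ε)) ^ 4 := setIntegral_compl_ball_Ubub_pow_four_le (by positivity)
    _ = 48 * ε ^ 4 / δ ^ 4 := by field_simp; ring
end
end

section
/- There exists a constant C > 0 such that for all ε, t with 0 < ε ≤ t, one has ∫_{ℝ⁴} U_{ε,te₁}(x)²·U_{ε,−te₁}(x)² dx ≤ C·(ε⁴/t⁴)·(1 + log(t/ε)). -/
/-!
Write `p = |x - a|`, `q = |x + a|` and `t = |a|`, so that `p + q ≥ 2t`. Up to `c₄⁴ ε⁴` the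
integrand is `(ε² + p²)⁻² (ε² + q²)⁻²`, and the larger of `p, q` is at least `t`; hence the
integrand is bounded by the sum of the two translates (to `±a`) of the radial kernel
`(ε² + |y|²)⁻² (t² + |y|²)⁻²`. In polar coordinates the kernel integrates to a multiple of
`∫ r³ (ε² + r²)⁻² (t² + r²)⁻² dr`, which is at most `t⁻⁴ ∫₀ᵗ r / (ε² + r²) dr ≈ t⁻⁴ log (t/ε)`
on `[0, t]` and `O(t⁻⁴)` on `[t, ∞)`.
-/

noncomputable section

open MeasureTheory Real RealInnerProductSpace

open Set Metric

def overlapKernel (ε t s : ℝ) : ℝ := ((ε ^ 2 + s ^ 2) ^ 2 * (t ^ 2 + s ^ 2) ^ 2)⁻¹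

lemma overlapKernel_nonneg (ε t s : ℝ) : 0 ≤ overlapKernel ε t s := by
  unfold overlapKernel; positivity

lemma continuous_overlapKernel {ε t : ℝ} (hε : ε ≠ 0) (ht : t ≠ 0) :
    Continuous (overlapKernel ε t) :=
  Continuous.inv₀ (by fun_prop) fun s => by positivity

lemma inv_sq_mul_sq_le_overlapKernel {ε t p q : ℝ} (hε : 0 < ε) (ht : 0 < t) (hp : 0 ≤ p)
    (hq : 0 ≤ q) (hpq : 2 * t ≤ p + q) :
    ((ε ^ 2 + p ^ 2) ^ 2 * (ε ^ 2 + q ^ 2) ^ 2)⁻¹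
      ≤ 4 * (overlapKernel ε t p + overlapKernel ε t q) := by
  wlog hle : p ≤ q generalizing p q
  · simpa only [mul_comm, add_comm] using this hq hp (by linarith) (by linarith)
  have hsq : t ^ 2 + p ^ 2 ≤ 2 * (ε ^ 2 + q ^ 2) := by nlinarith
  have hden : (ε ^ 2 + p ^ 2) ^ 2 * (t ^ 2 + p ^ 2) ^ 2
      ≤ 4 * ((ε ^ 2 + p ^ 2) ^ 2 * (ε ^ 2 + q ^ 2) ^ 2) := by
    have := pow_le_pow_left₀ (by positivity) hsq 2
    nlinarith [sq_nonneg (ε ^ 2 + p ^ 2)]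
  have hp' : (4 * ((ε ^ 2 + p ^ 2) ^ 2 * (ε ^ 2 + q ^ 2) ^ 2))⁻¹ ≤ overlapKernel ε t p :=
    inv_anti₀ (by positivity) hden
  rw [mul_inv, inv_mul_le_iff₀ (by norm_num)] at hp'
  linarith [overlapKernel_nonneg ε t q]

lemma integral_Ioc_div_sq_add_sq {ε t : ℝ} (hε : ε ≠ 0) (ht : 0 ≤ t) :
    ∫ r in Ioc 0 t, r / (ε ^ 2 + r ^ 2) = log (1 + (t / ε) ^ 2) / 2 := by
  rw [← intervalIntegral.integral_of_le ht]
  have hderiv : ∀ r ∈ uIcc 0 t,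
      HasDerivAt (fun r => log (1 + (r / ε) ^ 2) / 2) (r / (ε ^ 2 + r ^ 2)) r := by
    intro r _
    have h := ((((hasDerivAt_id' r).div_const ε).fun_pow 2).const_add 1).log
      (by positivity : (1 : ℝ) + (r / ε) ^ 2 ≠ 0) |>.div_const 2
    refine h.congr_deriv ?_
    push_cast
    field_simp
  have hint : IntervalIntegrable (fun r => r / (ε ^ 2 + r ^ 2)) volume 0 t :=
    (continuous_id.div (by fun_prop) fun r => by positivity).intervalIntegrable _ _
  simp [intervalIntegral.integral_eq_sub_of_hasDerivAt hderiv hint]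

lemma log_one_add_sq_le {s : ℝ} (hs : 1 ≤ s) : log (1 + s ^ 2) ≤ log 2 + 2 * log s := by
  have h2 : 2 * log s = log (s ^ 2) := by simp [log_pow]
  rw [h2, ← log_mul two_ne_zero (by positivity)]
  exact log_le_log (by positivity) (by nlinarith)

lemma setIntegral_Ioc_pow_three_mul_overlapKernel_le {ε t : ℝ} (hε : 0 < ε) (ht : 0 < t) :
    ∫ r in Ioc 0 t, r ^ 3 * overlapKernel ε t r ≤ (t ^ 4)⁻¹ * (log (1 + (t / ε) ^ 2) / 2) := by
  rw [← integral_Ioc_div_sq_add_sq hε.ne' ht.le, ← integral_const_mul]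
  have hdiv : Continuous fun r : ℝ => r / (ε ^ 2 + r ^ 2) :=
    continuous_id.div (by fun_prop) fun r => by positivity
  refine setIntegral_mono_on
    (((continuous_pow 3).mul (continuous_overlapKernel hε.ne' ht.ne')).integrableOn_Ioc)
    ((continuous_const.mul hdiv).integrableOn_Ioc) measurableSet_Ioc fun r hr => ?_
  have hr : 0 < r := hr.1
  have hden : t ^ 4 * (r ^ 2 * (ε ^ 2 + r ^ 2)) ≤ (ε ^ 2 + r ^ 2) ^ 2 * (t ^ 2 + r ^ 2) ^ 2 := by
    have e1 : r ^ 2 * (ε ^ 2 + r ^ 2) ≤ (ε ^ 2 + r ^ 2) ^ 2 := by nlinarith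
    have e2 : t ^ 4 ≤ (t ^ 2 + r ^ 2) ^ 2 := by nlinarith
    nlinarith [mul_le_mul e2 e1 (by positivity) (by positivity)]
  calc r ^ 3 * overlapKernel ε t r ≤ r ^ 3 * (t ^ 4 * (r ^ 2 * (ε ^ 2 + r ^ 2)))⁻¹ :=
        mul_le_mul_of_nonneg_left (inv_anti₀ (by positivity) hden) (by positivity)
    _ = (t ^ 4)⁻¹ * (r / (ε ^ 2 + r ^ 2)) := by field_simp

lemma pow_three_mul_overlapKernel_le_of_lt {ε t r : ℝ} (ht : 0 < t) (hr : t < r) :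
    r ^ 3 * overlapKernel ε t r ≤ (4 * t ^ 2)⁻¹ * r ^ (-3 : ℝ) := by
  have hr0 : 0 < r := ht.trans hr
  have hden : 4 * t ^ 2 * r ^ 3 * r ^ 3 ≤ (ε ^ 2 + r ^ 2) ^ 2 * (t ^ 2 + r ^ 2) ^ 2 := by
    have e1 : r ^ 4 ≤ (ε ^ 2 + r ^ 2) ^ 2 := by nlinarith [sq_nonneg ε]
    have e2 : 4 * t ^ 2 * r ^ 2 ≤ (t ^ 2 + r ^ 2) ^ 2 := by nlinarith [sq_nonneg (t ^ 2 - r ^ 2)]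
    nlinarith [mul_le_mul e1 e2 (by positivity) (by positivity)]
  rw [rpow_neg hr0.le, show (3 : ℝ) = (3 : ℕ) by norm_num, rpow_natCast]
  calc r ^ 3 * overlapKernel ε t r ≤ r ^ 3 * (4 * t ^ 2 * r ^ 3 * r ^ 3)⁻¹ :=
        mul_le_mul_of_nonneg_left (inv_anti₀ (by positivity) hden) (by positivity)
    _ = (4 * t ^ 2)⁻¹ * (r ^ 3)⁻¹ := by field_simp

lemma integrableOn_Ioi_pow_three_mul_overlapKernel {ε t : ℝ} (hε : 0 < ε) (ht : 0 < t) :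
    IntegrableOn (fun r => r ^ 3 * overlapKernel ε t r) (Ioi t) := by
  refine ((integrableOn_Ioi_rpow_of_lt (a := -3) (by norm_num) ht).const_mul (4 * t ^ 2)⁻¹).mono'
    ((continuous_pow 3).mul (continuous_overlapKernel hε.ne' ht.ne')).aestronglyMeasurable
    ((ae_restrict_iff' measurableSet_Ioi).2 (.of_forall fun r hr => ?_))
  have hr0 : 0 < r := ht.trans hr
  rw [norm_of_nonneg (by have := overlapKernel_nonneg ε t r; positivity)]
  exact pow_three_mul_overlapKernel_le_of_lt ht hr

lemma setIntegral_Ioi_pow_three_mul_overlapKernel_le {ε t : ℝ} (hε : 0 < ε) (ht : 0 < t) :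
    ∫ r in Ioi t, r ^ 3 * overlapKernel ε t r ≤ (t ^ 4)⁻¹ / 8 :=
  calc ∫ r in Ioi t, r ^ 3 * overlapKernel ε t r
      ≤ ∫ r in Ioi t, (4 * t ^ 2)⁻¹ * r ^ (-3 : ℝ) :=
        setIntegral_mono_on (integrableOn_Ioi_pow_three_mul_overlapKernel hε ht)
          ((integrableOn_Ioi_rpow_of_lt (by norm_num) ht).const_mul _) measurableSet_Ioi
          fun _ hr => pow_three_mul_overlapKernel_le_of_lt ht hr
    _ = (t ^ 4)⁻¹ / 8 := by
        rw [integral_const_mul, integral_Ioi_rpow_of_lt (by norm_num) ht,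
          show (-3 : ℝ) + 1 = -(2 : ℕ) by norm_num, rpow_neg ht.le, rpow_natCast]
        field_simp
        ring

lemma integral_Ioi_pow_three_mul_overlapKernel_le {ε t : ℝ} (hε : 0 < ε) (hεt : ε ≤ t) :
    ∫ r in Ioi 0, r ^ 3 * overlapKernel ε t r ≤ (t ^ 4)⁻¹ * (1 + log (t / ε)) := by
  have ht : 0 < t := hε.trans_le hεt
  have hlog := log_one_add_sq_le ((one_le_div hε).2 hεt)
  have hlog2 := log_two_lt_d9
  have hIoc : IntegrableOn (fun r => r ^ 3 * overlapKernel ε t r) (Ioc 0 t) :=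
    ((continuous_pow 3).mul (continuous_overlapKernel hε.ne' ht.ne')).integrableOn_Ioc
  rw [← Ioc_union_Ioi_eq_Ioi ht.le, setIntegral_union (Ioc_disjoint_Ioi le_rfl) measurableSet_Ioi
    hIoc (integrableOn_Ioi_pow_three_mul_overlapKernel hε ht)]
  have := add_le_add (setIntegral_Ioc_pow_three_mul_overlapKernel_le hε ht)
    (setIntegral_Ioi_pow_three_mul_overlapKernel_le hε ht)
  have ht4 : 0 < (t ^ 4)⁻¹ := by positivity
  nlinarith

lemma integrable_overlapKernel_norm {E : Type*} [NormedAddCommGroup E] [NormedSpace ℝ E]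
    [FiniteDimensional ℝ E] [MeasurableSpace E] [BorelSpace E] (μ : Measure E)
    [μ.IsAddHaarMeasure] (hE : Module.finrank ℝ E < 8) {ε t : ℝ} (hε : ε ≠ 0) (ht : t ≠ 0) :
    Integrable (fun x => overlapKernel ε t ‖x‖) μ := by
  set m := min (min (ε ^ 2) (t ^ 2)) 1
  have hm : 0 < m := by positivity
  refine ((integrable_rpow_neg_one_add_norm_sq (μ := μ) (r := 8) (by exact_mod_cast hE)).const_mul
    (m ^ 4)⁻¹).mono' ((continuous_overlapKernel hε ht).comp continuous_norm).aestronglyMeasurable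
    (.of_forall fun x => ?_)
  set s := ‖x‖ ^ 2
  have hms : m * s ≤ s := mul_le_of_le_one_left (by positivity) (min_le_right _ _)
  have hε' : m * (1 + s) ≤ ε ^ 2 + s := by
    linarith [(min_le_left (min (ε ^ 2) (t ^ 2)) 1).trans (min_le_left _ _)]
  have ht' : m * (1 + s) ≤ t ^ 2 + s := by
    linarith [(min_le_left (min (ε ^ 2) (t ^ 2)) 1).trans (min_le_right _ _)]
  have hden : (m * (1 + s)) ^ 2 * (m * (1 + s)) ^ 2 ≤ (ε ^ 2 + s) ^ 2 * (t ^ 2 + s) ^ 2 :=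
    mul_le_mul (pow_le_pow_left₀ (by positivity) hε' 2) (pow_le_pow_left₀ (by positivity) ht' 2)
      (by positivity) (by positivity)
  rw [norm_of_nonneg (overlapKernel_nonneg _ _ _), show (-8 : ℝ) / 2 = -(4 : ℕ) by norm_num,
    rpow_neg (by positivity), rpow_natCast, ← mul_inv]
  calc overlapKernel ε t ‖x‖ ≤ ((m * (1 + s)) ^ 2 * (m * (1 + s)) ^ 2)⁻¹ :=
        inv_anti₀ (by positivity) hden
    _ = (m ^ 4 * (1 + s) ^ 4)⁻¹ := by ring

lemma integral_overlapKernel_norm_le {ε t : ℝ} (hε : 0 < ε) (hεt : ε ≤ t) :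
    ∫ x : E4, overlapKernel ε t ‖x‖
      ≤ 4 * volume.real (ball (0 : E4) 1) * ((t ^ 4)⁻¹ * (1 + log (t / ε))) := by
  rw [integral_fun_norm_addHaar, finrank_euclideanSpace_fin, nsmul_eq_mul, smul_eq_mul,
    ← mul_assoc]
  have := integral_Ioi_pow_three_mul_overlapKernel_le hε hεt
  exact mul_le_mul_of_nonneg_left (by simpa using this) (by positivity)

lemma Ueps_eq {ε : ℝ} (hε : 0 < ε) (z x : E4) :
    Ueps ε z x = c4 * (ε / (ε ^ 2 + ‖x - z‖ ^ 2)) := by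
  rw [Ueps, Ubub, norm_smul, norm_inv, norm_of_nonneg hε.le]
  field_simp

lemma Ueps_sq_mul_Ueps_neg_sq_le {ε : ℝ} (hε : 0 < ε) {a : E4} (ha : a ≠ 0) (x : E4) :
    Ueps ε a x ^ 2 * Ueps ε (-a) x ^ 2
      ≤ 4 * c4 ^ 4 * ε ^ 4 * (overlapKernel ε ‖a‖ ‖x - a‖ + overlapKernel ε ‖a‖ ‖x + a‖) := by
  have hsep : 2 * ‖a‖ ≤ ‖x - a‖ + ‖x + a‖ :=
    calc 2 * ‖a‖ = ‖(x + a) - (x - a)‖ := by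
          rw [show (x + a) - (x - a) = (2 : ℝ) • a by module, norm_smul, Real.norm_two]
      _ ≤ ‖x - a‖ + ‖x + a‖ := (norm_sub_le _ _).trans_eq (add_comm _ _)
  have key := inv_sq_mul_sq_le_overlapKernel hε (norm_pos_iff.2 ha) (norm_nonneg _)
    (norm_nonneg _) hsep
  rw [Ueps_eq hε, Ueps_eq hε, sub_neg_eq_add]
  calc (c4 * (ε / (ε ^ 2 + ‖x - a‖ ^ 2))) ^ 2 * (c4 * (ε / (ε ^ 2 + ‖x + a‖ ^ 2))) ^ 2
      = c4 ^ 4 * ε ^ 4 * ((ε ^ 2 + ‖x - a‖ ^ 2) ^ 2 * (ε ^ 2 + ‖x + a‖ ^ 2) ^ 2)⁻¹ := by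
        field_simp
    _ ≤ _ := by
        rw [mul_assoc (4 : ℝ), mul_comm (4 : ℝ), mul_assoc _ 4]
        gcongr

lemma integral_Ueps_sq_mul_Ueps_neg_sq_le {ε : ℝ} (hε : 0 < ε) {a : E4} (ha : a ≠ 0) :
    ∫ x, Ueps ε a x ^ 2 * Ueps ε (-a) x ^ 2
      ≤ 8 * c4 ^ 4 * ε ^ 4 * ∫ x : E4, overlapKernel ε ‖a‖ ‖x‖ := by
  have hK := integrable_overlapKernel_norm (volume : Measure E4)
    (by simp) hε.ne' (norm_ne_zero_iff.2 ha)
  have hsub := hK.comp_sub_right a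
  have hadd := hK.comp_add_right a
  calc ∫ x, Ueps ε a x ^ 2 * Ueps ε (-a) x ^ 2
      ≤ ∫ x, 4 * c4 ^ 4 * ε ^ 4 * (overlapKernel ε ‖a‖ ‖x - a‖ + overlapKernel ε ‖a‖ ‖x + a‖) :=
        integral_mono_of_nonneg (.of_forall fun x => by positivity)
          ((hsub.add hadd).const_mul _) (.of_forall (Ueps_sq_mul_Ueps_neg_sq_le hε ha))
    _ = 8 * c4 ^ 4 * ε ^ 4 * ∫ x : E4, overlapKernel ε ‖a‖ ‖x‖ := by
        rw [integral_const_mul, integral_add hsub hadd,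
          integral_sub_right_eq_self (fun x => overlapKernel ε ‖a‖ ‖x‖),
          integral_add_right_eq_self (fun x => overlapKernel ε ‖a‖ ‖x‖)]
        ring

/-- There is `C > 0` such that for `0 < ε ≤ t`,
`∫ U_{ε,te₁}² U_{ε,-te₁}² ≤ C (ε⁴/t⁴)(1 + log(t/ε))`. -/
theorem stmt12 :
    ∃ C : ℝ, 0 < C ∧ ∀ ε t : ℝ, 0 < ε → ε ≤ t →
      (∫ x : E4, Ueps ε (t • e1) x ^ 2 * Ueps ε (-(t • e1)) x ^ 2)
        ≤ C * (ε ^ 4 / t ^ 4) * (1 + Real.log (t / ε)) := by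
  have hV : 0 < volume.real (ball (0 : E4) 1) :=
    ENNReal.toReal_pos (measure_ball_pos _ _ one_pos).ne' measure_ball_lt_top.ne
  have hc4 : 0 < c4 := rpow_pos_of_pos (by positivity) _
  refine ⟨32 * c4 ^ 4 * volume.real (ball (0 : E4) 1), by positivity, fun ε t hε hεt => ?_⟩
  have ht : 0 < t := hε.trans_le hεt
  have hnorm : ‖t • e1‖ = t := by simp [e1, norm_smul, abs_of_pos ht]
  have ha : t • e1 ≠ 0 := by rw [← norm_ne_zero_iff, hnorm]; exact ht.ne'
  calc _ ≤ 8 * c4 ^ 4 * ε ^ 4 * ∫ x : E4, overlapKernel ε t ‖x‖ := by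
        simpa only [hnorm] using integral_Ueps_sq_mul_Ueps_neg_sq_le hε ha
    _ ≤ 8 * c4 ^ 4 * ε ^ 4 * (4 * volume.real (ball (0 : E4) 1) *
          ((t ^ 4)⁻¹ * (1 + log (t / ε)))) := by
        gcongr
        exact integral_overlapKernel_norm_le hε hεt
    _ = _ := by ring
end
end

section
/- There exists a constant C > 0 such that for every δ > 0 and all ε, t with 0 < ε and 0 < t ≤ δ/2, one has ∫_{B_δ} U_{ε,te₁}(y)⁴·|y|² dy ≤ C·( t² + ε⁴/t² ). -/
noncomputable section

open MeasureTheory Real RealInnerProductSpace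

lemma c4_nonneg : 0 ≤ c4 := Real.rpow_nonneg (by positivity) _

lemma c4_le_one : c4 ≤ 1 := by
  have h : (6:ℝ)/Real.pi^2 ≤ 1 := by
    rw [div_le_one (by positivity)]
    nlinarith [Real.pi_gt_three]
  exact Real.rpow_le_one (by positivity) h (by norm_num)

lemma integrable_majorant : Integrable (fun x : E4 => ((1:ℝ) + ‖x‖^2)^(-(6:ℝ)/2)) := by
  apply integrable_rpow_neg_one_add_norm_sq
  simp [finrank_euclideanSpace_fin]
  norm_num

lemma majorant_eq (s : ℝ) (hs : 0 ≤ s) : ((1:ℝ)+s)^(-(6:ℝ)/2) = (((1:ℝ)+s)^3)⁻¹ := by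
  rw [show (-(6:ℝ)/2) = -(3:ℝ) by norm_num, Real.rpow_neg (by linarith)]
  congr 1
  exact_mod_cast Real.rpow_natCast (1+s) 3

lemma integrable1 : Integrable (fun x : E4 => Ubub x ^ 4 * ‖x‖ ^ 2) := by
  refine integrable_majorant.mono' ?_ (Filter.Eventually.of_forall fun x => ?_)
  · exact ((by unfold Ubub; fun_prop : Measurable fun x : E4 => Ubub x ^ 4 * ‖x‖ ^ 2)).aestronglyMeasurable
  · set s := ‖x‖^2 with hsdef
    have hs : 0 ≤ s := by positivity
    have h1 : (0:ℝ) < 1 + s := by linarith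
    rw [majorant_eq s hs, Real.norm_of_nonneg (by unfold Ubub; positivity)]
    have key : c4^4 * s ≤ 1 + s := by
      nlinarith [c4_le_one, c4_nonneg, pow_le_one₀ c4_nonneg c4_le_one (n := 4), hs]
    unfold Ubub
    calc (c4 * (1+s)⁻¹)^4 * s = (c4^4*s) * ((1+s)^4)⁻¹ := by rw [mul_pow, ← inv_pow]; ring
      _ ≤ (1+s) * ((1+s)^4)⁻¹ := by gcongr
      _ = ((1+s)^3)⁻¹ := by field_simp

lemma integrable2 : Integrable (fun x : E4 => Ubub x ^ 4) := by
  refine integrable_majorant.mono' ?_ (Filter.Eventually.of_forall fun x => ?_)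
  · exact ((by unfold Ubub; fun_prop : Measurable fun x : E4 => Ubub x ^ 4)).aestronglyMeasurable
  · set s := ‖x‖^2 with hsdef
    have hs : 0 ≤ s := by positivity
    have h1 : (0:ℝ) < 1 + s := by linarith
    rw [majorant_eq s hs, Real.norm_of_nonneg (by unfold Ubub; positivity)]
    have key : c4^4 ≤ 1 + s := by
      nlinarith [pow_le_one₀ c4_nonneg c4_le_one (n := 4), hs]
    unfold Ubub
    calc (c4 * (1+s)⁻¹)^4 = (c4^4) * ((1+s)^4)⁻¹ := by rw [mul_pow, ← inv_pow]
      _ ≤ (1+s) * ((1+s)^4)⁻¹ := by gcongr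
      _ = ((1+s)^3)⁻¹ := by field_simp

set_option maxHeartbeats 800000 in
/-- There is `C > 0` such that for every `δ > 0` and `0 < ε`, `0 < t ≤ δ/2`,
`∫_{B_δ} U_{ε,te₁}⁴ |y|² ≤ C (t² + ε⁴/t²)`. -/
theorem stmt19 :
    ∃ C : ℝ, 0 < C ∧ ∀ δ ε t : ℝ, 0 < δ → 0 < ε → 0 < t → t ≤ δ / 2 →
      (∫ y in Metric.ball (0 : E4) δ, Ueps ε (t • e1) y ^ 4 * ‖y‖ ^ 2)
        ≤ C * (t ^ 2 + ε ^ 4 / t ^ 2) := by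
  set K : ℝ := ∫ x : E4, Ubub x ^ 4 * ‖x‖ ^ 2 with hK
  set K' : ℝ := ∫ x : E4, Ubub x ^ 4 with hK'
  have hKnn : 0 ≤ K := integral_nonneg fun x => by positivity
  have hK'nn : 0 ≤ K' := integral_nonneg fun x => by positivity
  refine ⟨2*K + 2*K' + 1, by positivity, fun δ ε t hδ hε ht htδ => ?_⟩
  set x₀ : E4 := t • e1 with hx₀
  have hnx₀ : ‖x₀‖ = t := by
    rw [hx₀, norm_smul, Real.norm_of_nonneg ht.le]
    simp [e1, EuclideanSpace.norm_single]
  set ψ : E4 → ℝ := fun w => (ε⁻¹ * Ubub w)^4 * (2*(ε*‖w‖)^2 + 2*t^2) with hψ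
  have hψeq : ψ = fun w => (2*ε⁻¹^4*ε^2) * (Ubub w ^ 4 * ‖w‖^2)
      + (2*ε⁻¹^4*t^2) * (Ubub w ^ 4) := by
    funext w; simp only [hψ]; ring
  have hψint : Integrable ψ := by
    rw [hψeq]
    exact (integrable1.const_mul _).add (integrable2.const_mul _)
  set h : E4 → ℝ := fun y => Ueps ε x₀ y ^ 4 * (2*‖y - x₀‖^2 + 2*t^2) with hh
  have hcomp : ∀ y : E4, h y = ψ (ε⁻¹ • (y - x₀)) := by
    intro y
    simp only [hh, hψ, Ueps]
    congr 2
    rw [norm_smul]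
    rw [Real.norm_of_nonneg (by positivity)]
    field_simp
  have hφint : Integrable (fun z : E4 => ψ (ε⁻¹ • z)) :=
    hψint.comp_smul (by positivity : (ε:ℝ)⁻¹ ≠ 0)
  have hhint : Integrable h := by
    have := hφint.comp_sub_right x₀
    simpa [← hcomp] using this
  -- value of ∫ h
  have hval : ∫ y, h y = 2*ε^2*K + 2*t^2*K' := by
    have e1' : ∫ y, h y = ∫ z, ψ (ε⁻¹ • z) := by
      simp_rw [hcomp]
      exact integral_sub_right_eq_self (fun z => ψ (ε⁻¹ • z)) x₀
    have e2 : ∫ z : E4, ψ (ε⁻¹ • z) = |((ε⁻¹ ^ Module.finrank ℝ E4)⁻¹)| • ∫ w, ψ w :=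
      Measure.integral_comp_smul volume ψ ε⁻¹
    have hfr : Module.finrank ℝ E4 = 4 := by simp [finrank_euclideanSpace_fin]
    have e3 : |((ε⁻¹ ^ Module.finrank ℝ E4)⁻¹)| = ε^4 := by
      rw [hfr, abs_of_nonneg (by positivity)]
      field_simp
    have e4 : ∫ w, ψ w = (2*ε⁻¹^4*ε^2) * K + (2*ε⁻¹^4*t^2) * K' := by
      rw [hψeq, integral_add (integrable1.const_mul _) (integrable2.const_mul _),
        integral_const_mul, integral_const_mul]
    rw [e1', e2, e3, e4, smul_eq_mul]
    field_simp
  -- pointwise bound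
  have hpt : ∀ y : E4, Ueps ε x₀ y ^ 4 * ‖y‖ ^ 2 ≤ h y := by
    intro y
    have h1 : ‖y‖ ≤ ‖y - x₀‖ + t := by
      rw [← hnx₀]
      simpa using norm_add_le (y - x₀) x₀
    have h2 : ‖y‖^2 ≤ 2*‖y - x₀‖^2 + 2*t^2 := by
      nlinarith [norm_nonneg y, norm_nonneg (y - x₀), sq_nonneg (‖y - x₀‖ - t)]
    have h3 : (0:ℝ) ≤ Ueps ε x₀ y ^ 4 := by positivity
    exact mul_le_mul_of_nonneg_left h2 h3
  have hgint : Integrable (fun y : E4 => Ueps ε x₀ y ^ 4 * ‖y‖ ^ 2) := by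
    refine hhint.mono' ?_ (Filter.Eventually.of_forall fun y => ?_)
    · have : Measurable fun y : E4 => Ueps ε x₀ y ^ 4 * ‖y‖ ^ 2 := by
        unfold Ueps Ubub; fun_prop
      exact this.aestronglyMeasurable
    · rw [Real.norm_of_nonneg (by positivity)]
      exact hpt y
  have hmain : (∫ y in Metric.ball (0 : E4) δ, Ueps ε x₀ y ^ 4 * ‖y‖ ^ 2) ≤ ∫ y, h y := by
    calc (∫ y in Metric.ball (0 : E4) δ, Ueps ε x₀ y ^ 4 * ‖y‖ ^ 2)
        ≤ ∫ y in Metric.ball (0 : E4) δ, h y :=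
          setIntegral_mono_on hgint.integrableOn hhint.integrableOn
            measurableSet_ball (fun y _ => hpt y)
      _ ≤ ∫ y, h y := setIntegral_le_integral hhint
          (Filter.Eventually.of_forall fun y => by simp only [hh]; positivity)
  rw [hval] at hmain
  -- arithmetic
  have he : ε^2 ≤ t^2 + ε^4/t^2 := by
    have h1 : ε^2*t^2 ≤ t^2*t^2 + ε^4 := by nlinarith [sq_nonneg (t^2 - ε^2)]
    have h2 : ε^2 = ε^2*t^2/t^2 := by field_simp
    rw [h2]
    calc ε^2*t^2/t^2 ≤ (t^2*t^2 + ε^4)/t^2 := by gcongr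
      _ = t^2 + ε^4/t^2 := by field_simp
  have hdiv : (0:ℝ) ≤ ε^4/t^2 := by positivity
  refine hmain.trans ?_
  have hS : (0:ℝ) ≤ t^2 + ε^4/t^2 := by positivity
  have a1 : 2*K*ε^2 ≤ 2*K*(t^2+ε^4/t^2) := mul_le_mul_of_nonneg_left he (by linarith)
  have ht2 : t^2 ≤ t^2 + ε^4/t^2 := by linarith
  have a2 : 2*K'*t^2 ≤ 2*K'*(t^2+ε^4/t^2) := mul_le_mul_of_nonneg_left ht2 (by linarith)
  have expand : (2*K+2*K'+1)*(t^2+ε^4/t^2)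
      = 2*K*(t^2+ε^4/t^2) + 2*K'*(t^2+ε^4/t^2) + (t^2+ε^4/t^2) := by ring
  rw [expand]
  linarith
end
end
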